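/- arXiv:1805.10098 — 6 statements merged into one kernel-verified Lean document; each statement's English description precedes it below -/
import Mathlib

section
/- Let (X,d) be a Cantor space and let f be an equicontinuous homeomorphism of X. Then f is topologically stable if and only if f has the strict periodic shadowing property. -/
/-! Common definitions: distances on maps/homeomorphisms of a metric space,
topological stability and shadowing-type properties. -/

variable {X : Type*} [MetricSpace X]

/-- The `C⁰`-distance `d_{C⁰}(f,g) = sup_{x ∈ X} d (f x) (g x)` between self-maps. -/
noncomputable def dC0 (f g : X → X) : ℝ :=
  ⨆ x : X, dist (f x) (g x)

/-- The distance `D(f,g) = max (d_{C⁰}(f,g)) (d_{C⁰}(f⁻¹,g⁻¹))` between homeomorphisms. -/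
noncomputable def DH (f g : X ≃ₜ X) : ℝ :=
  max (dC0 (f : X → X) (g : X → X)) (dC0 (f.symm : X → X) (g.symm : X → X))

/-- `f` is topologically stable. -/
def TopologicallyStable (f : X ≃ₜ X) : Prop :=
  ∀ ε > 0, ∃ δ > 0, ∀ g : X ≃ₜ X, DH f g < δ →
    ∃ h : X → X, Continuous h ∧ dC0 h id < ε ∧ h ∘ (g : X → X) = (f : X → X) ∘ h

/-- `f` is topologically stable in the strong sense (the conjugating map is surjective). -/
def STopologicallyStable (f : X ≃ₜ X) : Prop :=
  ∀ ε > 0, ∃ δ > 0, ∀ g : X ≃ₜ X, DH f g < δ →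
    ∃ h : X → X, Continuous h ∧ Function.Surjective h ∧ dC0 h id < ε ∧
      h ∘ (g : X → X) = (f : X → X) ∘ h

/-- `f` has the shadowing property. -/
def HasShadowing (f : X ≃ₜ X) : Prop :=
  ∀ ε > 0, ∃ δ > 0, ∀ x : ℕ → X,
    (∀ i, dist (f (x i)) (x (i + 1)) ≤ δ) →
    ∃ p : X, ∀ i, dist (x i) ((f : X → X)^[i] p) ≤ ε

/-- `f` has the strict periodic shadowing property: every `δ`-cycle of length `m`
is `ε`-shadowed by a point `p` with `f^[m] p = p`. -/
def StrictPeriodicShadowing (f : X ≃ₜ X) : Prop :=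
  ∀ ε > 0, ∃ δ > 0, ∀ (m : ℕ) (x : ℕ → X), 1 ≤ m →
    (∀ i < m, dist (f (x i)) (x (i + 1)) ≤ δ) → x 0 = x m →
    ∃ p : X, (f : X → X)^[m] p = p ∧ ∀ i ≤ m, dist (x i) ((f : X → X)^[i] p) ≤ ε

/-- `f` has the periodic shadowing property: every `δ`-cycle is `ε`-shadowed by
a periodic point of `f`. -/
def PeriodicShadowing (f : X ≃ₜ X) : Prop :=
  ∀ ε > 0, ∃ δ > 0, ∀ (m : ℕ) (x : ℕ → X), 1 ≤ m →
    (∀ i < m, dist (f (x i)) (x (i + 1)) ≤ δ) → x 0 = x m →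
    ∃ p ∈ Function.periodicPts (f : X → X), ∀ i ≤ m, dist (x i) ((f : X → X)^[i] p) ≤ ε

/-- `x` is a chain recurrent point of `f`: for every `δ > 0` there is a `δ`-cycle
of `f` through `x`. -/
def ChainRecurrent (f : X → X) (x : X) : Prop :=
  ∀ δ > 0, ∃ (m : ℕ) (c : ℕ → X), 1 ≤ m ∧ c 0 = x ∧ c m = x ∧
    ∀ i < m, dist (f (c i)) (c (i + 1)) ≤ δ

/-- `f` has the pseudo periodic shadowing property: every `δ`-cycle is `ε`-shadowed
by some (not necessarily periodic) point. -/
def PseudoPeriodicShadowing (f : X → X) : Prop :=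
  ∀ ε > 0, ∃ δ > 0, ∀ (m : ℕ) (x : ℕ → X), 1 ≤ m →
    (∀ i < m, dist (f (x i)) (x (i + 1)) ≤ δ) → x 0 = x m →
    ∃ p : X, ∀ i ≤ m, dist (x i) (f^[i] p) ≤ ε

/-- The property* of a compact metric space. -/
def PropertyStar (Y : Type*) [MetricSpace Y] : Prop :=
  ∀ ε > 0, ∃ δ > 0, ∀ (n : ℕ) (x y : Fin n → Y), 1 ≤ n →
    Function.Injective x → Function.Injective y →
    (∀ i, dist (x i) (y i) < δ) →
    ∃ φ : Y ≃ₜ Y, DH φ (Homeomorph.refl Y) < ε ∧ ∀ i, φ (x i) = y i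

/-- `f` is an equicontinuous homeomorphism: the family of all iterates
`f^n`, `n ∈ ℤ`, is uniformly equicontinuous. -/
def EquicontinuousHomeo (f : X ≃ₜ X) : Prop :=
  ∀ ε > 0, ∃ δ > 0, ∀ x y : X, dist x y ≤ δ →
    ∀ n : ℤ, dist ((f.toEquiv ^ n) x) ((f.toEquiv ^ n) y) ≤ ε

/-- The set of bi-infinite `δ`-pseudo orbits of `f`. -/
def PseudoOrbitsZ (f : X ≃ₜ X) (δ : ℝ) : Set (ℤ → X) :=
  {x | ∀ i : ℤ, dist (f (x i)) (x (i + 1)) ≤ δ}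

/-- `f` has the continuous shadowing property. -/
def ContinuousShadowing (f : X ≃ₜ X) : Prop :=
  ∀ ε > 0, ∃ δ > 0, ∃ r : PseudoOrbitsZ f δ → X, Continuous r ∧
    ∀ x : PseudoOrbitsZ f δ, ∀ i : ℤ,
      dist ((f.toEquiv ^ i) (r x)) ((x : ℤ → X) i) ≤ ε

/-- `x` is a non-wandering point of `f`. -/
def NonWandering (f : X ≃ₜ X) (x : X) : Prop :=
  ∀ U ∈ nhds x, ∃ n : ℕ, 0 < n ∧ ∃ y ∈ U, (f : X → X)^[n] y ∈ U

set_option linter.unusedSectionVars false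
namespace TS4

variable {X : Type*} [MetricSpace X] [CompactSpace X] [Nonempty X]

/-- The adapted sup metric. -/
noncomputable def dE (f : X ≃ₜ X) (x y : X) : ℝ :=
  ⨆ n : ℤ, dist ((f.toEquiv ^ n) x) ((f.toEquiv ^ n) y)

lemma bdd_dE (f : X ≃ₜ X) (x y : X) :
    BddAbove (Set.range fun n : ℤ => dist ((f.toEquiv ^ n) x) ((f.toEquiv ^ n) y)) := by
  refine ⟨Metric.diam (Set.univ : Set X), ?_⟩
  rintro r ⟨n, rfl⟩
  exact Metric.dist_le_diam_of_mem isCompact_univ.isBounded trivial trivial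

lemma dE_apply_le (f : X ≃ₜ X) (x y : X) (n : ℤ) :
    dist ((f.toEquiv ^ n) x) ((f.toEquiv ^ n) y) ≤ dE f x y :=
  le_ciSup (bdd_dE f x y) n

lemma dist_le_dE (f : X ≃ₜ X) (x y : X) : dist x y ≤ dE f x y := by
  have := dE_apply_le f x y 0
  simpa using this

lemma dE_le (f : X ≃ₜ X) {x y : X} {c : ℝ}
    (h : ∀ n : ℤ, dist ((f.toEquiv ^ n) x) ((f.toEquiv ^ n) y) ≤ c) : dE f x y ≤ c :=
  ciSup_le h

lemma dE_nonneg (f : X ≃ₜ X) (x y : X) : 0 ≤ dE f x y :=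
  le_trans dist_nonneg (dist_le_dE f x y)

lemma dE_self (f : X ≃ₜ X) (x : X) : dE f x x = 0 := by
  refine le_antisymm (dE_le f fun n => ?_) (dE_nonneg f x x)
  simp

lemma dE_symm (f : X ≃ₜ X) (x y : X) : dE f x y = dE f y x := by
  unfold dE
  congr 1
  funext n
  exact dist_comm _ _

lemma dE_triangle (f : X ≃ₜ X) (x y z : X) : dE f x z ≤ dE f x y + dE f y z :=
  dE_le f fun n => (dist_triangle _ ((f.toEquiv ^ n) y) _).trans
    (add_le_add (dE_apply_le f x y n) (dE_apply_le f y z n))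

lemma dE_map (f : X ≃ₜ X) (x y : X) : dE f (f x) (f y) = dE f x y := by
  have key : ∀ (n : ℤ) (z : X), (f.toEquiv ^ n) (f z) = (f.toEquiv ^ (n + 1)) z := by
    intro n z
    rw [zpow_add_one]
    rfl
  refine le_antisymm (dE_le f fun n => ?_) (dE_le f fun n => ?_)
  · rw [key n x, key n y]
    exact dE_apply_le f x y (n + 1)
  · have hx : (f.toEquiv ^ n) x = (f.toEquiv ^ (n - 1)) (f x) := by
      rw [key (n - 1) x, sub_add_cancel]
    have hy : (f.toEquiv ^ n) y = (f.toEquiv ^ (n - 1)) (f y) := by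
      rw [key (n - 1) y, sub_add_cancel]
    rw [hx, hy]
    exact dE_apply_le f (f x) (f y) (n - 1)

lemma dE_iter (f : X ≃ₜ X) (i : ℕ) (x y : X) :
    dE f ((f : X → X)^[i] x) ((f : X → X)^[i] y) = dE f x y := by
  induction i with
  | zero => simp
  | succ n ih =>
    rw [Function.iterate_succ_apply', Function.iterate_succ_apply', dE_map, ih]

lemma dE_mod (f : X ≃ₜ X) (hf : EquicontinuousHomeo f) :
    ∀ ε > 0, ∃ δ > 0, ∀ x y : X, dist x y ≤ δ → dE f x y ≤ ε := by
  intro ε hε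
  obtain ⟨δ, hδ, h⟩ := hf ε hε
  exact ⟨δ, hδ, fun x y hxy => dE_le f (h x y hxy)⟩

lemma symm_iter_apply_iter (f : X ≃ₜ X) (n : ℕ) (z : X) :
    (f.symm : X → X)^[n] ((f : X → X)^[n] z) = z := by
  exact (Function.LeftInverse.iterate f.symm_apply_apply n) z

lemma iter_apply_symm_iter (f : X ≃ₜ X) (n : ℕ) (z : X) :
    (f : X → X)^[n] ((f.symm : X → X)^[n] z) = z := by
  exact (Function.LeftInverse.iterate f.apply_symm_apply n) z

/- dC0 facts -/
lemma bdd_dist_range (g₁ g₂ : X → X) :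
    BddAbove (Set.range fun x => dist (g₁ x) (g₂ x)) := by
  refine ⟨Metric.diam (Set.univ : Set X), ?_⟩
  rintro r ⟨x, rfl⟩
  exact Metric.dist_le_diam_of_mem isCompact_univ.isBounded trivial trivial

lemma dist_le_dC0 (g₁ g₂ : X → X) (x : X) : dist (g₁ x) (g₂ x) ≤ dC0 g₁ g₂ :=
  le_ciSup (bdd_dist_range g₁ g₂) x

lemma dC0_le {g₁ g₂ : X → X} {c : ℝ} (h : ∀ x, dist (g₁ x) (g₂ x) ≤ c) :
    dC0 g₁ g₂ ≤ c :=
  ciSup_le h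

/-- `η`-chains with respect to the adapted metric `dE`. -/
def Chn (f : X ≃ₜ X) (η : ℝ) (x y : X) : Prop :=
  ∃ (l : ℕ) (c : ℕ → X), c 0 = x ∧ c l = y ∧ ∀ i < l, dE f (c i) (c (i + 1)) ≤ η

namespace Chn

lemma refl (f : X ≃ₜ X) (η : ℝ) (x : X) : Chn f η x x :=
  ⟨0, fun _ => x, rfl, rfl, by omega⟩

lemma single {f : X ≃ₜ X} {η : ℝ} {x y : X} (h : dE f x y ≤ η) : Chn f η x y := by
  refine ⟨1, fun i => if i = 0 then x else y, by simp, by simp, ?_⟩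
  intro i hi
  interval_cases i
  simpa using h

lemma mono {f : X ≃ₜ X} {η η' : ℝ} {x y : X} (hηη : η ≤ η') (h : Chn f η x y) :
    Chn f η' x y := by
  obtain ⟨l, c, h0, hl, hs⟩ := h
  exact ⟨l, c, h0, hl, fun i hi => (hs i hi).trans hηη⟩

lemma trans {f : X ≃ₜ X} {η : ℝ} {x y z : X} (h1 : Chn f η x y) (h2 : Chn f η y z) :
    Chn f η x z := by
  obtain ⟨l1, c1, h10, h1l, h1s⟩ := h1
  obtain ⟨l2, c2, h20, h2l, h2s⟩ := h2
  refine ⟨l1 + l2, fun i => if i ≤ l1 then c1 i else c2 (i - l1), by simp [h10], ?_, ?_⟩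
  · by_cases hl2 : l2 = 0
    · subst hl2
      simpa [h1l, h20] using h2l
    · have : ¬ (l1 + l2 ≤ l1) := by omega
      dsimp only
      rw [if_neg this]
      simpa using h2l
  · intro i hi
    dsimp only
    by_cases hA : i + 1 ≤ l1
    · rw [if_pos (by omega : i ≤ l1), if_pos hA]
      exact h1s i (by omega)
    · by_cases hB : i ≤ l1
      · -- i = l1
        have hieq : i = l1 := by omega
        subst hieq
        rw [if_pos le_rfl, if_neg hA, h1l, ← h20]
        have : i + 1 - i = 1 := by omega
        rw [this]
        exact h2s 0 (by omega)
      · rw [if_neg hB, if_neg hA]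
        have h1 : i - l1 + 1 = i + 1 - l1 := by omega
        rw [← h1]
        exact h2s (i - l1) (by omega)

lemma symm {f : X ≃ₜ X} {η : ℝ} {x y : X} (h : Chn f η x y) : Chn f η y x := by
  obtain ⟨l, c, h0, hl, hs⟩ := h
  refine ⟨l, fun i => c (l - i), by simp [hl], by simp [h0], ?_⟩
  intro i hi
  dsimp only
  have h1 : l - i = (l - (i + 1)) + 1 := by omega
  rw [dE_symm, h1]
  exact hs (l - (i + 1)) (by omega)

lemma map {f : X ≃ₜ X} {η : ℝ} {x y : X} (h : Chn f η x y) : Chn f η (f x) (f y) := by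
  obtain ⟨l, c, h0, hl, hs⟩ := h
  refine ⟨l, fun i => f (c i), by simp [h0], by simp [hl], ?_⟩
  intro i hi
  dsimp only
  rw [dE_map]
  exact hs i hi

lemma map_symm {f : X ≃ₜ X} {η : ℝ} {x y : X} (h : Chn f η x y) :
    Chn f η (f.symm x) (f.symm y) := by
  obtain ⟨l, c, h0, hl, hs⟩ := h
  refine ⟨l, fun i => f.symm (c i), by simp [h0], by simp [hl], ?_⟩
  intro i hi
  have := dE_map f (f.symm (c i)) (f.symm (c (i + 1)))
  simp only [Homeomorph.apply_symm_apply] at this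
  dsimp only
  rw [← this]
  exact hs i hi

lemma cancel {f : X ≃ₜ X} {η : ℝ} {x y : X} (h : Chn f η (f x) (f y)) : Chn f η x y := by
  have := h.map_symm
  simpa using this

lemma map_iter {f : X ≃ₜ X} {η : ℝ} {x y : X} (i : ℕ) (h : Chn f η x y) :
    Chn f η ((f : X → X)^[i] x) ((f : X → X)^[i] y) := by
  induction i with
  | zero => simpa using h
  | succ n ih =>
    rw [Function.iterate_succ_apply', Function.iterate_succ_apply']
    exact ih.map

lemma cancel_iter {f : X ≃ₜ X} {η : ℝ} {x y : X} (i : ℕ)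
    (h : Chn f η ((f : X → X)^[i] x) ((f : X → X)^[i] y)) : Chn f η x y := by
  induction i with
  | zero => simpa using h
  | succ n ih =>
    rw [Function.iterate_succ_apply', Function.iterate_succ_apply'] at h
    exact ih h.cancel

end Chn

/-- Chains with small steps cannot leave a "metrically clopen" set. -/
lemma chn_stay {f : X ≃ₜ X} {η : ℝ} {U : Set X} {θ₀ : ℝ}
    (hsep : ∀ u ∈ U, ∀ v, v ∉ U → θ₀ ≤ dist u v) (hθ : η < θ₀) {x y : X}
    (hc : Chn f η x y) (hx : x ∈ U) : y ∈ U := by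
  obtain ⟨l, c, h0, hl, hs⟩ := hc
  have key : ∀ i, i ≤ l → c i ∈ U := by
    intro i
    induction i with
    | zero => intro _; rw [h0]; exact hx
    | succ n ih =>
      intro hle
      have hn := ih (by omega)
      by_contra hnotin
      have h1 := hsep (c n) hn (c (n + 1)) hnotin
      have h2 := dist_le_dE f (c n) (c (n + 1))
      have h3 := hs n (by omega)
      linarith
  rw [← hl]
  exact key l le_rfl

/-- Positive separation between a clopen set and its complement. -/
lemma clopen_sep {U : Set X} (hU : IsClopen U) (hne : U.Nonempty) (hnc : Uᶜ.Nonempty) :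
    ∃ θ₀ > 0, ∀ u ∈ U, ∀ v, v ∉ U → θ₀ ≤ dist u v := by
  have hUcomp : IsCompact U := hU.isClosed.isCompact
  have hUc : IsClosed (Uᶜ) := hU.isOpen.isClosed_compl
  obtain ⟨u₀, hu₀U, hmin⟩ := hUcomp.exists_isMinOn hne
    (Metric.continuous_infDist_pt (Uᶜ)).continuousOn
  have hpos : 0 < Metric.infDist u₀ (Uᶜ) := by
    rw [← hUc.notMem_iff_infDist_pos hnc]
    simpa using hu₀U
  refine ⟨Metric.infDist u₀ (Uᶜ), hpos, fun u hu v hv => ?_⟩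
  exact (hmin hu).trans (Metric.infDist_le_dist_of_mem hv)

variable [TotallyDisconnectedSpace X]

/-- Mesh lemma: chains with small enough steps stay within `dE`-distance `ε`. -/
lemma mesh (f : X ≃ₜ X) (hf : EquicontinuousHomeo f) :
    ∀ ε > 0, ∃ η > 0, ∀ x y : X, Chn f η x y → dE f x y ≤ ε := by
  by_contra hcon
  push_neg at hcon
  obtain ⟨ε, hε, hbad⟩ := hcon
  have hseq : ∀ n : ℕ, ∃ xy : X × X, Chn f (1 / (n + 1)) xy.1 xy.2 ∧ ε < dE f xy.1 xy.2 := by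
    intro n
    obtain ⟨x, y, h1, h2⟩ := hbad (1 / (n + 1)) (by positivity)
    exact ⟨(x, y), h1, h2⟩
  choose u hu1 hu2 using hseq
  obtain ⟨ab, -, φ, hφ, hconv⟩ := isCompact_univ.tendsto_subseq (fun n => (Set.mem_univ (u n)))
  obtain ⟨a, b⟩ := ab
  have hconva : Filter.Tendsto (fun n => (u (φ n)).1) Filter.atTop (nhds a) :=
    (continuous_fst.tendsto _).comp hconv
  have hconvb : Filter.Tendsto (fun n => (u (φ n)).2) Filter.atTop (nhds b) :=
    (continuous_snd.tendsto _).comp hconv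
  -- a ≠ b
  obtain ⟨δ₄, hδ₄, hmod₄⟩ := dE_mod f hf (ε / 4) (by linarith)
  have hab : a ≠ b := by
    intro heq
    subst heq
    obtain ⟨N₁, hN₁⟩ := (Metric.tendsto_atTop.1 hconva) δ₄ hδ₄
    obtain ⟨N₂, hN₂⟩ := (Metric.tendsto_atTop.1 hconvb) δ₄ hδ₄
    set n := max N₁ N₂
    have e1 : dE f (u (φ n)).1 a ≤ ε / 4 :=
      hmod₄ _ _ (le_of_lt (hN₁ n (le_max_left _ _)))
    have e2 : dE f a (u (φ n)).2 ≤ ε / 4 := by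
      rw [dE_symm]
      exact hmod₄ _ _ (le_of_lt (hN₂ n (le_max_right _ _)))
    have := (dE_triangle f (u (φ n)).1 a (u (φ n)).2)
    have := hu2 (φ n)
    linarith
  obtain ⟨U, hUclopen, haU, hbU⟩ := exists_isClopen_of_totally_separated hab
  have hbU' : b ∉ U := hbU
  obtain ⟨θ₀, hθ₀, hsep⟩ := clopen_sep hUclopen ⟨a, haU⟩ ⟨b, hbU'⟩
  -- build a (θ₀/2)-chain from a to b
  set θ : ℝ := θ₀ / 2 with hθdef
  have hθpos : 0 < θ := by positivity
  obtain ⟨δθ, hδθ, hmodθ⟩ := dE_mod f hf θ hθpos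
  obtain ⟨N₁, hN₁⟩ := (Metric.tendsto_atTop.1 hconva) δθ hδθ
  obtain ⟨N₂, hN₂⟩ := (Metric.tendsto_atTop.1 hconvb) δθ hδθ
  obtain ⟨N₃, hN₃⟩ := exists_nat_one_div_lt hθpos
  set n := max (max N₁ N₂) N₃
  have hsmall : (1 : ℝ) / (φ n + 1) ≤ θ := by
    have h1 : (N₃ : ℝ) ≤ (φ n : ℝ) := by
      have : N₃ ≤ φ n := le_trans (le_max_right _ N₃) (hφ.le_apply)
      exact_mod_cast this
    have h2 : (0 : ℝ) < (N₃ : ℝ) + 1 := by positivity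
    calc (1 : ℝ) / (φ n + 1) ≤ 1 / (N₃ + 1) := by
          apply one_div_le_one_div_of_le h2
          linarith
      _ ≤ θ := le_of_lt hN₃
  have hc1 : Chn f θ a (u (φ n)).1 := by
    apply Chn.single
    rw [dE_symm]
    exact hmodθ _ _ (le_of_lt (hN₁ n (le_trans (le_max_left _ _) (le_max_left _ _))))
  have hc2 : Chn f θ (u (φ n)).1 (u (φ n)).2 := (hu1 (φ n)).mono hsmall
  have hc3 : Chn f θ (u (φ n)).2 b := by
    apply Chn.single
    exact hmodθ _ _ (le_of_lt (hN₂ n (le_trans (le_max_right _ _) (le_max_left _ _))))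
  have hchain : Chn f θ a b := (hc1.trans hc2).trans hc3
  exact hbU' (chn_stay hsep (by linarith) hchain haU)

/-- Every point chain-returns to itself (compactness pigeonhole). -/
lemma exists_return (f : X ≃ₜ X) (hf : EquicontinuousHomeo f) {η : ℝ} (hη : 0 < η) (x : X) :
    ∃ K : ℕ, 1 ≤ K ∧ Chn f η x ((f : X → X)^[K] x) := by
  obtain ⟨δ, hδ, hmod⟩ := dE_mod f hf η hη
  obtain ⟨z, -, φ, hφ, hconv⟩ :=
    isCompact_univ.tendsto_subseq (fun n => Set.mem_univ ((f : X → X)^[n] x))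
  obtain ⟨N, hN⟩ := Metric.tendsto_atTop.1 hconv (δ / 2) (by positivity)
  set n₁ := φ N
  set n₂ := φ (N + 1)
  have hlt : n₁ < n₂ := hφ (by omega)
  have hdist : dist ((f : X → X)^[n₁] x) ((f : X → X)^[n₂] x) ≤ δ := by
    have h1 := hN N le_rfl
    have h2 := hN (N + 1) (by omega)
    have := dist_triangle ((f : X → X)^[n₁] x) z ((f : X → X)^[n₂] x)
    rw [dist_comm z] at this
    simp only [Function.comp_apply] at h1 h2
    linarith
  have hch : Chn f η ((f : X → X)^[n₁] x) ((f : X → X)^[n₂] x) :=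
    Chn.single (hmod _ _ hdist)
  have heq : (f : X → X)^[n₂] x = (f : X → X)^[n₁] ((f : X → X)^[n₂ - n₁] x) := by
    rw [← Function.iterate_add_apply]
    congr 1
    omega
  rw [heq] at hch
  exact ⟨n₂ - n₁, by omega, Chn.cancel_iter n₁ (by simpa using hch)⟩

/-- Minimal chain-return time. -/
lemma exists_min_return (f : X ≃ₜ X) (hf : EquicontinuousHomeo f) {η : ℝ} (hη : 0 < η)
    (x : X) :
    ∃ K : ℕ, 1 ≤ K ∧ Chn f η x ((f : X → X)^[K] x) ∧
      ∀ j, 1 ≤ j → j < K → ¬ Chn f η x ((f : X → X)^[j] x) := by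
  have hex : ∃ K : ℕ, 1 ≤ K ∧ Chn f η x ((f : X → X)^[K] x) := exists_return f hf hη x
  classical
  refine ⟨Nat.find hex, (Nat.find_spec hex).1, (Nat.find_spec hex).2, ?_⟩
  intro j hj1 hjK hchn
  exact Nat.find_min hex hjK ⟨hj1, hchn⟩

/-- The minimal return time divides every chain-return time. -/
lemma return_dvd {f : X ≃ₜ X} {η : ℝ} {x : X} {K : ℕ} (hK1 : 1 ≤ K)
    (hKc : Chn f η x ((f : X → X)^[K] x))
    (hmin : ∀ j, 1 ≤ j → j < K → ¬ Chn f η x ((f : X → X)^[j] x)) :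
    ∀ m, Chn f η x ((f : X → X)^[m] x) → K ∣ m := by
  intro m
  induction m using Nat.strong_induction_on with
  | _ m ih =>
    intro hm
    rcases Nat.eq_zero_or_pos m with rfl | hpos
    · exact dvd_zero K
    have hKm : K ≤ m := by
      by_contra hcon
      exact hmin m hpos (by omega) hm
    have ha := hKc.map_iter (m - K)
    rw [← Function.iterate_add_apply] at ha
    have harith : m - K + K = m := by omega
    rw [harith] at ha
    have h2 : Chn f η x ((f : X → X)^[m - K] x) := hm.trans ha.symm
    have hd := ih (m - K) (by omega) h2
    have : m = (m - K) + K := by omega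
    rw [this]
    exact Nat.dvd_add hd dvd_rfl

lemma iterate_period_mul {f : X ≃ₜ X} {p : X} {K : ℕ} (hp : (f : X → X)^[K] p = p) (t : ℕ) :
    (f : X → X)^[K * t] p = p := by
  rw [Function.iterate_mul]
  exact Function.iterate_fixed hp t

lemma iterate_congr {f : X ≃ₜ X} {p : X} {K : ℕ} (hp : (f : X → X)^[K] p = p)
    {i j : ℕ} (hij : i ≤ j) (hd : K ∣ j - i) :
    (f : X → X)^[j] p = (f : X → X)^[i] p := by
  obtain ⟨t, ht⟩ := hd
  have hj : j = i + K * t := by omega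
  rw [hj, Function.iterate_add_apply, iterate_period_mul hp t]

/-- The key intermediate property: at every scale there are invariant chain classes
of small diameter, each carrying a periodic point of the exact return period. -/
def Aux (f : X ≃ₜ X) : Prop :=
  ∀ ε > 0, ∃ η > 0, (∀ x y : X, Chn f η x y → dE f x y ≤ ε) ∧
    ∀ x : X, ∃ K : ℕ, 1 ≤ K ∧ Chn f η x ((f : X → X)^[K] x) ∧
      (∀ j, 1 ≤ j → j < K → ¬ Chn f η x ((f : X → X)^[j] x)) ∧
      ∃ p : X, (f : X → X)^[K] p = p ∧ dE f p x ≤ ε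

/-- T3: strict periodic shadowing implies the auxiliary property. -/
lemma aux_of_sps (f : X ≃ₜ X) (hf : EquicontinuousHomeo f)
    (hsps : StrictPeriodicShadowing f) : Aux f := by
  intro ε hε
  obtain ⟨δ₁, hδ₁, hmod₁⟩ := dE_mod f hf ε hε
  set ε₂ := min ε δ₁ with hε₂def
  have hε₂ : 0 < ε₂ := lt_min hε hδ₁
  obtain ⟨δ, hδ, hshad⟩ := hsps ε₂ hε₂
  obtain ⟨η, hη, hmesh⟩ := mesh f hf (min δ ε) (lt_min hδ hε)
  refine ⟨η, hη, fun x y h => le_trans (hmesh x y h) (min_le_right _ _), ?_⟩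
  intro x
  obtain ⟨K, hK1, hKc, hKmin⟩ := exists_min_return f hf hη x
  refine ⟨K, hK1, hKc, hKmin, ?_⟩
  -- build a δ-cycle of length K through x
  classical
  set c : ℕ → X := fun i => if i < K then (f : X → X)^[i] x else x with hcdef
  have hc0 : c 0 = x := by simp [hcdef, hK1]
  have hcK : c K = x := by simp [hcdef]
  have hcyc : ∀ i < K, dist (f (c i)) (c (i + 1)) ≤ δ := by
    intro i hi
    have hci : c i = (f : X → X)^[i] x := by simp [hcdef, hi]
    by_cases hi1 : i + 1 < K
    · have : c (i + 1) = (f : X → X)^[i + 1] x := by simp [hcdef, hi1]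
      rw [hci, this, ← Function.iterate_succ_apply' (f : X → X) i x]
      simpa using hδ.le
    · have hieq : i + 1 = K := by omega
      have hcip : c (i + 1) = x := by rw [hieq]; exact hcK
      rw [hci, hcip, ← Function.iterate_succ_apply' (f : X → X) i x,
        Nat.succ_eq_add_one, hieq]
      calc dist ((f : X → X)^[K] x) x ≤ dE f ((f : X → X)^[K] x) x :=
            dist_le_dE f _ _
        _ = dE f x ((f : X → X)^[K] x) := dE_symm f _ _
        _ ≤ min δ ε := hmesh _ _ hKc
        _ ≤ δ := min_le_left _ _
  obtain ⟨p, hpK, hpsh⟩ := hshad K c hK1 hcyc (by rw [hc0, hcK])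
  refine ⟨p, hpK, ?_⟩
  have h0 := hpsh 0 (by omega)
  rw [hc0] at h0
  simp only [Function.iterate_zero, id_eq] at h0
  have : dist p x ≤ δ₁ := by
    rw [dist_comm]
    exact h0.trans (min_le_right _ _)
  exact hmod₁ p x this

/-- T2: the auxiliary property implies strict periodic shadowing. -/
lemma sps_of_aux (f : X ≃ₜ X) (hf : EquicontinuousHomeo f) (haux : Aux f) :
    StrictPeriodicShadowing f := by
  intro ε hε
  obtain ⟨η, hη, hmesh, hper⟩ := haux (ε / 2) (by linarith)
  obtain ⟨δ, hδ, hmod⟩ := dE_mod f hf η hη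
  refine ⟨δ, hδ, ?_⟩
  intro m x hm hcyc hx0m
  -- the chain follows the orbit of its starting point up to chains
  have hfollow : ∀ i ≤ m, Chn f η ((f : X → X)^[i] (x 0)) (x i) := by
    intro i
    induction i with
    | zero => intro _; exact Chn.refl f η (x 0)
    | succ n ih =>
      intro hle
      have h1 : Chn f η ((f : X → X)^[n + 1] (x 0)) (f (x n)) := by
        rw [Function.iterate_succ_apply']
        exact (ih (by omega)).map
      have h2 : Chn f η (f (x n)) (x (n + 1)) :=
        Chn.single (hmod _ _ (hcyc n (by omega)))
      exact h1.trans h2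
  have hret : Chn f η (x 0) ((f : X → X)^[m] (x 0)) := by
    have := hfollow m le_rfl
    rw [← hx0m] at this
    exact this.symm
  obtain ⟨K, hK1, hKc, hKmin, p, hpK, hpd⟩ := hper (x 0)
  have hdvd : K ∣ m := return_dvd hK1 hKc hKmin m hret
  obtain ⟨t, ht⟩ := hdvd
  refine ⟨p, by rw [ht]; exact iterate_period_mul hpK t, ?_⟩
  intro i hi
  have h1 : dist (x i) ((f : X → X)^[i] (x 0)) ≤ ε / 2 := by
    have := hmesh _ _ (hfollow i hi)
    calc dist (x i) ((f : X → X)^[i] (x 0))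
        ≤ dE f (x i) ((f : X → X)^[i] (x 0)) := dist_le_dE f _ _
      _ = dE f ((f : X → X)^[i] (x 0)) (x i) := dE_symm f _ _
      _ ≤ ε / 2 := this
  have h2 : dist ((f : X → X)^[i] (x 0)) ((f : X → X)^[i] p) ≤ ε / 2 := by
    calc dist ((f : X → X)^[i] (x 0)) ((f : X → X)^[i] p)
        ≤ dE f ((f : X → X)^[i] (x 0)) ((f : X → X)^[i] p) := dist_le_dE f _ _
      _ = dE f (x 0) p := dE_iter f i (x 0) p
      _ = dE f p (x 0) := dE_symm f _ _
      _ ≤ ε / 2 := hpd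
  calc dist (x i) ((f : X → X)^[i] p)
      ≤ dist (x i) ((f : X → X)^[i] (x 0)) + dist ((f : X → X)^[i] (x 0)) ((f : X → X)^[i] p) :=
        dist_triangle _ _ _
    _ ≤ ε / 2 + ε / 2 := add_le_add h1 h2
    _ = ε := by ring

/-- Chain classes are clopen. -/
lemma isClopen_cls (f : X ≃ₜ X) (hf : EquicontinuousHomeo f) {η : ℝ} (hη : 0 < η) (x : X) :
    IsClopen {y : X | Chn f η x y} := by
  obtain ⟨δ, hδ, hmod⟩ := dE_mod f hf η hη
  have hstep : ∀ y z : X, dist y z < δ → Chn f η y z := fun y z h =>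
    Chn.single (hmod y z h.le)
  constructor
  · rw [← isOpen_compl_iff]
    rw [Metric.isOpen_iff]
    intro y hy
    refine ⟨δ, hδ, fun z hz => ?_⟩
    intro hzC
    exact hy (hzC.trans ((hstep y z (by rwa [Metric.mem_ball, dist_comm] at hz)).symm))
  · rw [Metric.isOpen_iff]
    intro y hy
    refine ⟨δ, hδ, fun z hz => ?_⟩
    exact Chn.trans hy (hstep y z (by rwa [Metric.mem_ball, dist_comm] at hz))

/-- T1: topological stability implies the auxiliary property. -/
lemma aux_of_ts (f : X ≃ₜ X) (hf : EquicontinuousHomeo f)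
    (hts : TopologicallyStable f) : Aux f := by
  classical
  intro ε hε
  obtain ⟨δ₁, hδ₁, hmod₁⟩ := dE_mod f hf ε hε
  set ε₂ := min ε δ₁ with hε₂def
  have hε₂ : 0 < ε₂ := lt_min hε hδ₁
  obtain ⟨δ, hδ, hstab⟩ := hts ε₂ hε₂
  obtain ⟨η, hη, hmesh⟩ := mesh f hf (min (δ / 2) ε) (lt_min (by linarith) hε)
  refine ⟨η, hη, fun x y h => (hmesh x y h).trans (min_le_right _ _), ?_⟩
  intro x
  obtain ⟨K, hK1, hKc, hKmin⟩ := exists_min_return f hf hη x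
  refine ⟨K, hK1, hKc, hKmin, ?_⟩
  obtain ⟨L, rfl⟩ : ∃ L, K = L + 1 := ⟨K - 1, by omega⟩
  set C : Set X := {y : X | Chn f η x y} with hCdef
  set D : Set X := {y : X | Chn f η x ((f.symm : X → X)^[L] y)} with hDdef
  -- membership facts
  have hmem_fD : ∀ y, y ∈ D → Chn f η x (f y) := by
    intro y hy
    have h1 := (hy : Chn f η x ((f.symm : X → X)^[L] y)).map_iter (L + 1)
    have h2 : (f : X → X)^[L + 1] ((f.symm : X → X)^[L] y) = f y := by
      rw [Function.iterate_succ_apply', iter_apply_symm_iter]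
    rw [h2] at h1
    exact hKc.trans h1
  have hfD_mem : ∀ y, Chn f η x (f y) → y ∈ D := by
    intro y hy
    have h1 : Chn f η ((f : X → X)^[L + 1] x) (f y) := hKc.symm.trans hy
    rw [Function.iterate_succ_apply'] at h1
    have h3 : Chn f η ((f : X → X)^[L] x) y := h1.cancel
    apply Chn.cancel_iter L
    rwa [iter_apply_symm_iter]
  have hC_fiD : ∀ z, z ∈ C → (f : X → X)^[L] z ∈ D := by
    intro z hz
    show Chn f η x ((f.symm : X → X)^[L] ((f : X → X)^[L] z))
    rwa [symm_iter_apply_iter]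
  have hfsC_D : ∀ z, z ∈ C → f.symm z ∈ D := by
    intro z hz
    show Chn f η x ((f.symm : X → X)^[L] (f.symm z))
    rw [← Function.iterate_succ_apply]
    apply Chn.cancel_iter (L + 1) (y := (f.symm : X → X)^[L + 1] z)
    rw [iter_apply_symm_iter]
    exact hKc.symm.trans hz
  have hD_fs_mem : ∀ z, f.symm z ∈ D → z ∈ C := by
    intro z hz
    have h1 : Chn f η x ((f.symm : X → X)^[L + 1] z) := by
      rw [Function.iterate_succ_apply]
      exact hz
    have h2 := h1.map_iter (L + 1)
    rw [iter_apply_symm_iter] at h2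
    exact hKc.trans h2
  -- build the perturbed homeomorphism
  set g0 : X → X := fun y => if y ∈ D then (f.symm : X → X)^[L] y else f y with hg0def
  set gi : X → X := fun z => if z ∈ C then (f : X → X)^[L] z else f.symm z with hgidef
  have hleft : Function.LeftInverse gi g0 := by
    intro y
    by_cases hy : y ∈ D
    · have hmem : (f.symm : X → X)^[L] y ∈ C := hy
      simp only [hg0def, hgidef, if_pos hy, if_pos hmem]
      exact iter_apply_symm_iter f L y
    · have hfy : f y ∉ C := fun hc => hy (hfD_mem y hc)
      simp only [hg0def, hgidef, if_neg hy, if_neg hfy]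
      exact f.symm_apply_apply y
  have hright : Function.RightInverse gi g0 := by
    intro z
    by_cases hz : z ∈ C
    · have hmem : (f : X → X)^[L] z ∈ D := hC_fiD z hz
      simp only [hg0def, hgidef, if_pos hz, if_pos hmem]
      exact symm_iter_apply_iter f L z
    · have hfz : f.symm z ∉ D := fun hd => hz (hD_fs_mem z hd)
      simp only [hg0def, hgidef, if_neg hz, if_neg hfz]
      exact f.apply_symm_apply z
  set gE : X ≃ X := ⟨g0, gi, hleft, hright⟩ with hgEdef
  have hCclopen : IsClopen C := isClopen_cls f hf hη x
  have hDclopen : IsClopen D := by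
    have : D = ((f.symm : X → X)^[L]) ⁻¹' C := rfl
    rw [this]
    exact hCclopen.preimage ((f.symm.continuous).iterate L)
  have hg0cont : Continuous g0 := by
    have : g0 = D.piecewise ((f.symm : X → X)^[L]) (f : X → X) := rfl
    rw [this]
    refine Continuous.piecewise ?_ ((f.symm.continuous).iterate L) f.continuous
    rw [hDclopen.frontier_eq]
    simp
  set g : X ≃ₜ X := Continuous.homeoOfEquivCompactToT2 (f := gE) hg0cont with hgdef
  have hgcoe : (g : X → X) = g0 := rfl
  have hgsymmcoe : (g.symm : X → X) = gi := rfl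
  -- distance estimate
  have hDH : DH f g < δ := by
    have hb1 : dC0 (f : X → X) (g : X → X) ≤ δ / 2 := by
      apply dC0_le
      intro y
      rw [hgcoe]
      by_cases hy : y ∈ D
      · have hgy : (f.symm : X → X)^[L] y ∈ C := hy
        have hfy : f y ∈ C := hmem_fD y hy
        have hch : Chn f η (f y) (g0 y) := by
          simp only [hg0def, if_pos hy]
          exact (hfy : Chn f η x (f y)).symm.trans hgy
        calc dist (f y) (g0 y) ≤ dE f (f y) (g0 y) := dist_le_dE f _ _
          _ ≤ min (δ / 2) ε := hmesh _ _ hch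
          _ ≤ δ / 2 := min_le_left _ _
      · simp only [hg0def, if_neg hy]
        rw [dist_self]
        linarith
    have hb2 : dC0 (f.symm : X → X) (g.symm : X → X) ≤ δ / 2 := by
      apply dC0_le
      intro z
      rw [hgsymmcoe]
      by_cases hz : z ∈ C
      · have hm1 : f.symm z ∈ D := hfsC_D z hz
        have hm2 : (f : X → X)^[L] z ∈ D := hC_fiD z hz
        have hch : Chn f η (f.symm z) (gi z) := by
          simp only [hgidef, if_pos hz]
          have hc1 : Chn f η ((f.symm : X → X)^[L] (f.symm z))
              ((f.symm : X → X)^[L] ((f : X → X)^[L] z)) :=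
            (hm1 : Chn f η x _).symm.trans (hm2 : Chn f η x _)
          have := hc1.map_iter L
          rwa [iter_apply_symm_iter, iter_apply_symm_iter] at this
        calc dist (f.symm z) (gi z) ≤ dE f (f.symm z) (gi z) := dist_le_dE f _ _
          _ ≤ min (δ / 2) ε := hmesh _ _ hch
          _ ≤ δ / 2 := min_le_left _ _
      · simp only [hgidef, if_neg hz]
        rw [dist_self]
        linarith
    calc DH f g ≤ δ / 2 := max_le hb1 hb2
      _ < δ := by linarith
  -- g-periodicity of x
  have hgx : ∀ i, i ≤ L → (g0)^[i] x = (f : X → X)^[i] x := by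
    intro i
    induction i with
    | zero => intro _; rfl
    | succ n ih =>
      intro hle
      rw [Function.iterate_succ_apply', Function.iterate_succ_apply', ih (by omega)]
      have hnD : (f : X → X)^[n] x ∉ D := by
        intro hD
        have h5 : Chn f η x ((f : X → X)^[n + 1] x) := by
          rw [Function.iterate_succ_apply']
          exact hmem_fD _ hD
        exact hKmin (n + 1) (by omega) (by omega) h5
      simp only [hg0def, if_neg hnD]
  have hgK : (g0)^[L + 1] x = x := by
    rw [Function.iterate_succ_apply', hgx L le_rfl]
    have hmem : (f : X → X)^[L] x ∈ D := hC_fiD x (Chn.refl f η x)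
    simp only [hg0def, if_pos hmem]
    exact symm_iter_apply_iter f L x
  -- apply stability
  obtain ⟨h, hhcont, hhd, hhconj⟩ := hstab g hDH
  have hconj' : ∀ y, h (g0 y) = f (h y) := by
    intro y
    have := congrFun hhconj y
    simpa [hgcoe] using this
  have hconjiter : ∀ (n : ℕ) (y : X), h ((g0)^[n] y) = (f : X → X)^[n] (h y) := by
    intro n
    induction n with
    | zero => intro y; rfl
    | succ m ih =>
      intro y
      rw [Function.iterate_succ_apply', Function.iterate_succ_apply', hconj', ih]
  refine ⟨h x, ?_, ?_⟩
  · have := hconjiter (L + 1) x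
    rw [hgK] at this
    exact this.symm
  · have hdist : dist (h x) x ≤ δ₁ := by
      have h1 : dist (h x) (id x) ≤ dC0 h id := dist_le_dC0 h id x
      simp only [id_eq] at h1
      calc dist (h x) x ≤ dC0 h id := h1
        _ ≤ ε₂ := hhd.le
        _ ≤ δ₁ := by rw [hε₂def]; exact min_le_right _ _
    exact hmod₁ _ _ hdist

/-- T4: the auxiliary property implies topological stability. -/
lemma ts_of_aux (f : X ≃ₜ X) (hf : EquicontinuousHomeo f) (haux : Aux f) :
    TopologicallyStable f := by
  classical
  intro ε hε
  obtain ⟨η, hη, hmesh, hper⟩ := haux (ε / 3) (by linarith)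
  obtain ⟨δη, hδη, hmod⟩ := dE_mod f hf η hη
  refine ⟨δη, hδη, ?_⟩
  intro g hg
  choose K hK1 hKc hKmin p hpK hpd using hper
  set rel : X → X → Prop :=
    fun a b => ∃ i : ℕ, Chn f η a ((f : X → X)^[i] b) ∨ Chn f η ((f : X → X)^[i] a) b
    with hreldef
  have rel_of_iter : ∀ {a b : X} (i j : ℕ),
      Chn f η ((f : X → X)^[i] a) ((f : X → X)^[j] b) → rel a b := by
    intro a b i j hc
    rcases le_total i j with hij | hij
    · have heq : (f : X → X)^[j] b = (f : X → X)^[i] ((f : X → X)^[j - i] b) := by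
        rw [← Function.iterate_add_apply]; congr 1; omega
      rw [heq] at hc
      exact ⟨j - i, Or.inl (Chn.cancel_iter i hc)⟩
    · have heq : (f : X → X)^[i] a = (f : X → X)^[j] ((f : X → X)^[i - j] a) := by
        rw [← Function.iterate_add_apply]; congr 1; omega
      rw [heq] at hc
      exact ⟨i - j, Or.inr (Chn.cancel_iter j hc)⟩
  have hrefl : ∀ a, rel a a := fun a => ⟨0, Or.inl (Chn.refl f η a)⟩
  have hsymm : ∀ {a b}, rel a b → rel b a := by
    rintro a b ⟨i, hi | hi⟩
    · exact ⟨i, Or.inr hi.symm⟩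
    · exact ⟨i, Or.inl hi.symm⟩
  have htrans : ∀ {a b c}, rel a b → rel b c → rel a c := by
    rintro a b c ⟨i, hi⟩ ⟨j, hj⟩
    rcases hi with hi | hi <;> rcases hj with hj | hj
    · have h1 := hj.map_iter i
      rw [← Function.iterate_add_apply] at h1
      exact rel_of_iter 0 (i + j) (hi.trans h1)
    · have h1 := hi.map_iter j
      rw [← Function.iterate_add_apply] at h1
      have h2 := hj.map_iter i
      rw [← Function.iterate_add_apply] at h2
      have heq : j + i = i + j := by omega
      rw [heq] at h1
      exact rel_of_iter j i (h1.trans h2)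
    · exact rel_of_iter i j (hi.trans hj)
    · have h1 := hi.map_iter j
      rw [← Function.iterate_add_apply] at h1
      exact rel_of_iter (j + i) 0 (h1.trans hj)
  set s : Setoid X := ⟨rel, ⟨hrefl, hsymm, htrans⟩⟩ with hsdef
  set r : X → X := fun a => (Quotient.mk s a).out with hrdef
  have hr_rel : ∀ a, rel a (r a) := by
    intro a
    have h1 : Quotient.mk s ((Quotient.mk s a).out) = Quotient.mk s a :=
      Quotient.out_eq _
    exact hsymm (Quotient.exact h1)
  have hr_eq : ∀ {a b}, rel a b → r a = r b := by
    intro a b hab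
    rw [hrdef]
    dsimp only
    rw [Quotient.sound (s := s) hab]
  have hidx_ex : ∀ a, ∃ i : ℕ, Chn f η a ((f : X → X)^[i] (r a)) := by
    intro a
    obtain ⟨i, hi | hi⟩ := hr_rel a
    · exact ⟨i, hi⟩
    · set b := r a with hbdef
      have hbmult : ∀ t : ℕ, Chn f η b ((f : X → X)^[K b * t] b) := by
        intro t
        induction t with
        | zero => simpa using Chn.refl f η b
        | succ u ih =>
          have h1 := (hKc b).map_iter (K b * u)
          rw [← Function.iterate_add_apply] at h1
          have harith : K b * u + K b = K b * (u + 1) := by ring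
          rw [harith] at h1
          exact ih.trans h1
      have hge : i ≤ K b * i := Nat.le_mul_of_pos_left i (by have := hK1 b; omega)
      have h3 : Chn f η ((f : X → X)^[i] a) ((f : X → X)^[K b * i] b) :=
        hi.trans (hbmult i)
      have heq : (f : X → X)^[K b * i] b = (f : X → X)^[i] ((f : X → X)^[K b * i - i] b) := by
        rw [← Function.iterate_add_apply]; congr 1; omega
      rw [heq] at h3
      exact ⟨K b * i - i, Chn.cancel_iter i h3⟩
  set idx : X → ℕ := fun a => Nat.find (hidx_ex a) with hidxdef
  have hidx : ∀ a, Chn f η a ((f : X → X)^[idx a] (r a)) := fun a => Nat.find_spec (hidx_ex a)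
  have hcongr : ∀ (a : X) (i j : ℕ), Chn f η a ((f : X → X)^[i] (r a)) →
      Chn f η a ((f : X → X)^[j] (r a)) →
      (f : X → X)^[i] (p (r a)) = (f : X → X)^[j] (p (r a)) := by
    have key : ∀ (a : X) (i j : ℕ), i ≤ j → Chn f η a ((f : X → X)^[i] (r a)) →
        Chn f η a ((f : X → X)^[j] (r a)) →
        (f : X → X)^[j] (p (r a)) = (f : X → X)^[i] (p (r a)) := by
      intro a i j hij hi hj
      have h1 : Chn f η ((f : X → X)^[i] (r a)) ((f : X → X)^[j] (r a)) := hi.symm.trans hj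
      have heq : (f : X → X)^[j] (r a) = (f : X → X)^[i] ((f : X → X)^[j - i] (r a)) := by
        rw [← Function.iterate_add_apply]; congr 1; omega
      rw [heq] at h1
      have h2 : Chn f η (r a) ((f : X → X)^[j - i] (r a)) := Chn.cancel_iter i h1
      have hdvd := return_dvd (hK1 (r a)) (hKc (r a)) (hKmin (r a)) (j - i) h2
      exact iterate_congr (hpK (r a)) hij hdvd
    intro a i j hi hj
    rcases le_total i j with hij | hij
    · exact (key a i j hij hi hj).symm
    · exact key a j i hij hj hi
  set h : X → X := fun a => (f : X → X)^[idx a] (p (r a)) with hhdef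
  have h_congr : ∀ {a c : X}, Chn f η a c → h c = h a := by
    intro a c hac
    have hrel : rel a c := ⟨0, Or.inl hac⟩
    have hrc : r c = r a := (hr_eq hrel).symm
    have hc1 : Chn f η c ((f : X → X)^[idx a] (r c)) := by
      rw [hrc]
      exact hac.symm.trans (hidx a)
    have hcc := hcongr c (idx c) (idx a) (hidx c) hc1
    rw [hhdef]
    dsimp only
    rw [hcc, hrc]
  have hgstep : ∀ a, Chn f η (f a) ((g : X → X) a) := by
    intro a
    apply Chn.single
    apply hmod
    calc dist (f a) (g a) ≤ dC0 (f : X → X) (g : X → X) := dist_le_dC0 _ _ a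
      _ ≤ DH f g := le_max_left _ _
      _ ≤ δη := hg.le
  have hfstep : ∀ a, h (f a) = f (h a) := by
    intro a
    have hrelfa : rel (f a) a := ⟨1, Or.inl (by simpa using Chn.refl f η (f a))⟩
    have hrfa : r (f a) = r a := hr_eq hrelfa
    have hc2 : Chn f η (f a) ((f : X → X)^[idx a + 1] (r (f a))) := by
      rw [hrfa, Function.iterate_succ_apply']
      exact (hidx a).map
    have hcc := hcongr (f a) (idx (f a)) (idx a + 1) (hidx (f a)) hc2
    rw [hhdef]
    dsimp only
    rw [hcc, hrfa, Function.iterate_succ_apply']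
  have hconj : h ∘ (g : X → X) = (f : X → X) ∘ h := by
    funext a
    simp only [Function.comp_apply]
    rw [h_congr (hgstep a), hfstep a]
  have hclose : ∀ a, dist (h a) a ≤ ε / 3 + ε / 3 := by
    intro a
    have h1 : dE f ((f : X → X)^[idx a] (p (r a))) ((f : X → X)^[idx a] (r a)) ≤ ε / 3 := by
      rw [dE_iter]
      exact hpd (r a)
    have h2 : dE f a ((f : X → X)^[idx a] (r a)) ≤ ε / 3 := hmesh _ _ (hidx a)
    calc dist (h a) a
        ≤ dist (h a) ((f : X → X)^[idx a] (r a)) + dist ((f : X → X)^[idx a] (r a)) a :=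
          dist_triangle _ _ _
      _ ≤ ε / 3 + ε / 3 := by
          refine add_le_add ((dist_le_dE f _ _).trans h1) ?_
          rw [dist_comm]
          exact (dist_le_dE f _ _).trans h2
  have hcont : Continuous h := by
    rw [continuous_iff_continuousAt]
    intro a
    have hev : ∀ᶠ c in nhds a, h c = h a := by
      filter_upwards [Metric.ball_mem_nhds a hδη] with c hc
      refine h_congr (Chn.single (hmod a c ?_))
      rw [Metric.mem_ball, dist_comm] at hc
      exact hc.le
    exact Filter.EventuallyEq.continuousAt hev
  refine ⟨h, hcont, ?_, hconj⟩
  have : dC0 h id ≤ ε / 3 + ε / 3 := dC0_le fun a => by simpa using hclose a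
  calc dC0 h id ≤ ε / 3 + ε / 3 := this
    _ < ε := by linarith

end TS4

/-- On a Cantor space, an equicontinuous homeomorphism is topologically
stable iff it has the strict periodic shadowing property. -/
theorem topologicallyStable_iff_strictPeriodicShadowing
    {X : Type*} [MetricSpace X] [CompactSpace X] [PerfectSpace X]
    [TotallyDisconnectedSpace X] [Nonempty X] (f : X ≃ₜ X)
    (hf : EquicontinuousHomeo f) :
    TopologicallyStable f ↔ StrictPeriodicShadowing f := by
  constructor
  · intro hts
    exact TS4.sps_of_aux f hf (TS4.aux_of_ts f hf hts)
  · intro hsps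
    exact TS4.ts_of_aux f hf (TS4.aux_of_sps f hf hsps)
end

section
/- Let (X,d) be a compact metric space and let f be a homeomorphism of X. If X is totally disconnected (topological dimension zero) and every point of X is a periodic point of f, then f is equicontinuous and has the strict periodic shadowing property. -/
/-! Common definitions: distances on maps/homeomorphisms of a metric space,
topological stability and shadowing-type properties. -/

variable {X : Type*} [MetricSpace X]

section ZDAuxSection
open Set Filter Topology
set_option linter.unusedSectionVars false
set_option maxHeartbeats 1000000

namespace ZD
open scoped Classical
variable {X : Type*} [MetricSpace X]


lemma zpow_apply_comp (f : X ≃ₜ X) (s t : ℤ) (x : X) :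
    (f.toEquiv ^ s) ((f.toEquiv ^ t) x) = (f.toEquiv ^ (s + t)) x := by
  rw [zpow_add]; rfl

lemma coe_pow_eq_iterate (f : X ≃ₜ X) (n : ℕ) (x : X) :
    (f.toEquiv ^ (n : ℤ)) x = (⇑f)^[n] x := by
  rw [zpow_natCast]
  have h1 : ⇑(f.toEquiv ^ n) = (⇑f.toEquiv)^[n] := Equiv.Perm.coe_pow _ _
  rw [h1]; rfl

lemma continuous_zpow (f : X ≃ₜ X) (t : ℤ) :
    Continuous fun x : X => (f.toEquiv ^ t) x := by
  cases t with
  | ofNat n =>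
      have : (fun x : X => (f.toEquiv ^ (n : ℤ)) x) = (⇑f)^[n] := by
        funext x; exact coe_pow_eq_iterate f n x
      rw [Int.ofNat_eq_coe, this]
      exact f.continuous.iterate n
  | negSucc n =>
      have h0 : ∀ x, (f.toEquiv ^ Int.negSucc n) x = (⇑f.symm)^[n+1] x := by
        intro x
        rw [zpow_negSucc]
        have h1 : (f.toEquiv ^ (n+1))⁻¹ = (f.toEquiv⁻¹) ^ (n+1) := (inv_pow _ _).symm
        have h2 : f.toEquiv⁻¹ = f.symm.toEquiv := rfl
        rw [h1, h2]
        have h3 : ⇑(f.symm.toEquiv ^ (n+1)) = (⇑f.symm.toEquiv)^[n+1] := Equiv.Perm.coe_pow _ _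
        rw [h3]; rfl
      have : (fun x : X => (f.toEquiv ^ Int.negSucc n) x) = (⇑f.symm)^[n+1] := by
        funext x; exact h0 x
      rw [this]
      exact f.symm.continuous.iterate (n+1)

lemma fixed_zpow {g : Equiv.Perm X} {x : X} (h : g x = x) : ∀ c : ℤ, (g ^ c) x = x := by
  have hn : ∀ n : ℕ, (g ^ n) x = x := by
    intro n
    induction n with
    | zero => simp
    | succ n ih => rw [pow_succ, Equiv.Perm.mul_apply, h, ih]
  intro c
  cases c with
  | ofNat n => rw [Int.ofNat_eq_coe, zpow_natCast]; exact hn n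
  | negSucc n =>
      rw [zpow_negSucc]
      have h1 := hn (n+1)
      have := congrArg (⇑(g ^ (n+1))⁻¹) h1
      rw [Equiv.Perm.inv_def, Equiv.symm_apply_apply] at this
      exact this.symm

lemma fixed_zpow_mul (f : X ≃ₜ X) {x : X} {n : ℕ} (hx : (⇑f)^[n] x = x) (c : ℤ) :
    (f.toEquiv ^ ((n : ℤ) * c)) x = x := by
  have hb : (f.toEquiv ^ (n : ℤ)) x = x := by rw [coe_pow_eq_iterate]; exact hx
  rw [zpow_mul]
  exact fixed_zpow hb c

lemma shift_by_fixed (f : X ≃ₜ X) {v : X} {q : ℕ} (hq : (⇑f)^[q] v = v) (s c : ℤ) :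
    (f.toEquiv ^ (s + (q:ℤ) * c)) v = (f.toEquiv ^ s) v := by
  rw [← zpow_apply_comp f s ((q:ℤ)*c), fixed_zpow_mul f hq c]

lemma isOpen_eq_discrete {B : Type*} [TopologicalSpace B] [DiscreteTopology B]
    {g : X → B} (hg : Continuous g) (b : B) : IsOpen {y : X | g y = b} :=
  hg.isOpen_preimage _ (isOpen_discrete ({b} : Set B))

/-- key lemma -/
lemma uniform_period [CompactSpace X] (f : X ≃ₜ X)
    (hper : ∀ x : X, ∃ n : ℕ, 0 < n ∧ (⇑f)^[n] x = x)
    {B : Type*} [TopologicalSpace B] [DiscreteTopology B] (a : X → B) (ha : Continuous a) :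
    ∃ P : ℕ, 0 < P ∧ ∀ (x : X) (t : ℤ),
      a ((f.toEquiv ^ (t + (P : ℤ))) x) = a ((f.toEquiv ^ t) x) := by
  by_contra hcon
  push_neg at hcon
  have hz : ∀ k : ℕ, ∃ zz : X,
      a ((f.toEquiv ^ (((k+1).factorial : ℕ) : ℤ)) zz) ≠ a zz := by
    intro k
    obtain ⟨x, t, hxt⟩ := hcon ((k+1).factorial) (Nat.factorial_pos _)
    refine ⟨(f.toEquiv ^ t) x, ?_⟩
    rw [zpow_apply_comp, add_comm]
    intro heq
    apply hxt
    rw [heq]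
  choose z hzdef using hz
  obtain ⟨xb, φ, hφ, hconv⟩ := CompactSpace.tendsto_subseq z
  obtain ⟨p, hp, hfixp⟩ := hper xb
  have hbfix : ∀ c : ℤ, (f.toEquiv ^ ((p:ℤ) * c)) xb = xb := fixed_zpow_mul f hfixp
  have hbper : ∀ t : ℤ, (f.toEquiv ^ (t + (p:ℤ))) xb = (f.toEquiv ^ t) xb := by
    intro t
    have h1 : (f.toEquiv ^ ((p:ℤ) * 1)) xb = xb := hbfix 1
    rw [mul_one] at h1
    rw [← zpow_apply_comp f t (p:ℤ), h1]
  -- window neighbourhoods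
  set NT : ℕ → Set X := fun T =>
    ⋂ t ∈ Finset.Icc (-(T:ℤ)) (T:ℤ), {y : X | a ((f.toEquiv ^ t) y) = a ((f.toEquiv ^ t) xb)}
    with hNT
  have hNopen : ∀ T, IsOpen (NT T) := fun T =>
    isOpen_biInter_finset fun t _ => isOpen_eq_discrete (ha.comp (continuous_zpow f t)) _
  have hNxb : ∀ T, xb ∈ NT T := by
    intro T
    rw [hNT]
    exact mem_biInter fun t _ => rfl
  have hNmem : ∀ T (y : X), y ∈ NT T → ∀ t : ℤ, -(T:ℤ) ≤ t → t ≤ (T:ℤ) →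
      a ((f.toEquiv ^ t) y) = a ((f.toEquiv ^ t) xb) := by
    intro T y hy t h1 h2
    rw [hNT] at hy
    exact mem_iInter₂.1 hy t (Finset.mem_Icc.2 ⟨h1, h2⟩)
  -- selection of approximating points with defects
  have hsel : ∀ T : ℕ, ∃ mm : ℕ, T ≤ mm ∧ z mm ∈ NT T := by
    intro T
    have hev : ∀ᶠ k in atTop, (z ∘ φ) k ∈ NT T := hconv ((hNopen T).mem_nhds (hNxb T))
    obtain ⟨k, hk1, hk2⟩ := (hev.and (eventually_ge_atTop T)).exists
    exact ⟨φ k, le_trans hk2 hφ.le_apply, hk1⟩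
  choose m hmT hmN using hsel
  -- no defects inside the agreement window
  have hwf : ∀ (T : ℕ) (t : ℤ), (p:ℤ) ≤ (T:ℤ) → -(T:ℤ) ≤ t → t + (p:ℤ) ≤ (T:ℤ) →
      a ((f.toEquiv ^ (t + (p:ℤ))) (z (m T))) = a ((f.toEquiv ^ t) (z (m T))) := by
    intro T t hT h1 h2
    have hp0 : (0:ℤ) ≤ (p:ℤ) := by positivity
    have e1 : a ((f.toEquiv ^ (t + (p:ℤ))) (z (m T))) = a ((f.toEquiv ^ (t + (p:ℤ))) xb) :=
      hNmem T _ (hmN T) (t + (p:ℤ)) (by linarith) h2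
    have e2 : a ((f.toEquiv ^ t) (z (m T))) = a ((f.toEquiv ^ t) xb) :=
      hNmem T _ (hmN T) t h1 (by linarith)
    rw [e1, e2, hbper t]
  -- each approximant has a defect somewhere
  have hde : ∀ T : ℕ, (p:ℤ) ≤ (T:ℤ) → ∃ t : ℤ,
      a ((f.toEquiv ^ (t + (p:ℤ))) (z (m T))) ≠ a ((f.toEquiv ^ t) (z (m T))) := by
    intro T hT
    by_contra hnone
    push_neg at hnone
    have hmul : ∀ (c : ℕ) (t : ℤ),
        a ((f.toEquiv ^ (t + (c:ℤ)*(p:ℤ))) (z (m T))) = a ((f.toEquiv ^ t) (z (m T))) := by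
      intro c
      induction c with
      | zero => intro t; norm_num
      | succ c ih =>
          intro t
          have hre : (t + ((c+1:ℕ):ℤ)*(p:ℤ)) = (t + (p:ℤ)) + (c:ℤ)*(p:ℤ) := by push_cast; ring
          rw [hre, ih (t + (p:ℤ)), hnone t]
    have hpT : p ≤ T := by exact_mod_cast hT
    have hdvd : p ∣ (m T + 1).factorial :=
      Nat.dvd_factorial hp (le_trans hpT (le_trans (hmT T) (Nat.le_succ _)))
    obtain ⟨c, hc⟩ := hdvd
    apply hzdef (m T)
    have h0 := hmul c 0
    rw [zero_add] at h0
    have hcast : (((m T + 1).factorial : ℕ) : ℤ) = (c:ℤ)*(p:ℤ) := by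
      rw [hc]; push_cast; ring
    rw [hcast]
    simpa using h0
  -- a point with defect at 0 and no defects on [1, ∞) is impossible
  have hSB : ¬ ∃ v : X, a ((f.toEquiv ^ (p:ℤ)) v) ≠ a v ∧
      ∀ t : ℤ, 1 ≤ t → a ((f.toEquiv ^ (t + (p:ℤ))) v) = a ((f.toEquiv ^ t) v) := by
    rintro ⟨v, hv0, htail⟩
    obtain ⟨q, hq, hfixq⟩ := hper v
    have hall : ∀ t : ℤ, a ((f.toEquiv ^ (t + (p:ℤ))) v) = a ((f.toEquiv ^ t) v) := by
      intro t
      have hq1 : (1:ℤ) ≤ (q:ℤ) := by exact_mod_cast hq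
      have hs1 : 1 ≤ t + (q:ℤ) * (|t| + 1) := by nlinarith [abs_nonneg t, neg_abs_le t]
      have h1 : (f.toEquiv ^ ((t + (q:ℤ)*(|t|+1)) + (p:ℤ))) v = (f.toEquiv ^ (t + (p:ℤ))) v := by
        have hh : (t + (q:ℤ)*(|t|+1)) + (p:ℤ) = (t + (p:ℤ)) + (q:ℤ)*(|t|+1) := by ring
        rw [hh]; exact shift_by_fixed f hfixq _ _
      have h2 : (f.toEquiv ^ (t + (q:ℤ)*(|t|+1))) v = (f.toEquiv ^ t) v :=
        shift_by_fixed f hfixq t _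
      rw [← h1, ← h2]
      exact htail _ hs1
    apply hv0
    have h0 := hall 0
    rw [zero_add] at h0
    simpa using h0
  -- from each approximant produce a point with defect at 0 and a long defect-free past
  have hSA : ∀ T : ℕ, (p:ℤ) ≤ (T:ℤ) → ∃ v : X, a ((f.toEquiv ^ (p:ℤ)) v) ≠ a v ∧
      ∀ t : ℤ, -(T:ℤ) ≤ t → t ≤ -1 →
        a ((f.toEquiv ^ (t + (p:ℤ))) v) = a ((f.toEquiv ^ t) v) := by
    intro T hT
    obtain ⟨t₀, ht₀⟩ := hde T hT
    by_cases hA : ∃ t : ℤ, (a ((f.toEquiv ^ (t + (p:ℤ))) (z (m T))) ≠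
        a ((f.toEquiv ^ t) (z (m T)))) ∧ -(T:ℤ) ≤ t
    · obtain ⟨u, ⟨hu1, hu2⟩, humin⟩ := Int.exists_least_of_bdd ⟨-(T:ℤ), fun t ht => ht.2⟩ hA
      have huT : (T:ℤ) - (p:ℤ) < u := by
        by_contra hcon2
        push_neg at hcon2
        exact hu1 (hwf T u hT hu2 (by linarith))
      refine ⟨(f.toEquiv ^ u) (z (m T)), ?_, ?_⟩
      · rw [zpow_apply_comp, add_comm (p:ℤ) u]
        exact hu1
      · intro t h1 h2
        have hs1 : -(T:ℤ) ≤ t + u := by linarith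
        have hs2 : t + u < u := by linarith
        have hnd : a ((f.toEquiv ^ ((t+u) + (p:ℤ))) (z (m T)))
            = a ((f.toEquiv ^ (t+u)) (z (m T))) := by
          by_contra hd
          have := humin (t+u) ⟨hd, hs1⟩
          omega
        rw [zpow_apply_comp, zpow_apply_comp]
        have hre : (t + (p:ℤ)) + u = (t + u) + (p:ℤ) := by ring
        rw [hre]
        exact hnd
    · push_neg at hA
      exfalso
      apply hSB
      obtain ⟨u, hu1, humax⟩ := Int.exists_greatest_of_bdd
        ⟨-(T:ℤ), fun t ht => le_of_lt (hA t ht)⟩ ⟨t₀, ht₀⟩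
      refine ⟨(f.toEquiv ^ u) (z (m T)), ?_, ?_⟩
      · rw [zpow_apply_comp, add_comm (p:ℤ) u]
        exact hu1
      · intro t ht
        have hnd : a ((f.toEquiv ^ ((t+u) + (p:ℤ))) (z (m T)))
            = a ((f.toEquiv ^ (t+u)) (z (m T))) := by
          by_contra hd
          have := humax (t+u) hd
          omega
        rw [zpow_apply_comp, zpow_apply_comp]
        have hre : (t + (p:ℤ)) + u = (t + u) + (p:ℤ) := by ring
        rw [hre]
        exact hnd
  -- take a limit of the defect points
  have hSA' : ∀ T : ℕ, ∃ v : X, a ((f.toEquiv ^ (p:ℤ)) v) ≠ a v ∧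
      ∀ t : ℤ, -(T:ℤ) ≤ t → t ≤ -1 →
        a ((f.toEquiv ^ (t + (p:ℤ))) v) = a ((f.toEquiv ^ t) v) := by
    intro T
    obtain ⟨v, h1, h2⟩ := hSA (T + p) (by push_cast; linarith)
    refine ⟨v, h1, fun t ht1 ht2 => h2 t (by push_cast at ht1 ⊢; linarith) ht2⟩
  choose v hv0 hvwin using hSA'
  obtain ⟨vb, ψ, hψ, hconv2⟩ := CompactSpace.tendsto_subseq v
  obtain ⟨q, hq, hfixq⟩ := hper vb
  have hagree : ∀ t : ℤ, ∀ᶠ j in atTop,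
      a ((f.toEquiv ^ t) ((v ∘ ψ) j)) = a ((f.toEquiv ^ t) vb) := by
    intro t
    exact hconv2 ((isOpen_eq_discrete (ha.comp (continuous_zpow f t))
      (a ((f.toEquiv ^ t) vb))).mem_nhds rfl)
  have hvb0 : a ((f.toEquiv ^ (p:ℤ)) vb) ≠ a vb := by
    obtain ⟨j, hj1, hj2⟩ := ((hagree (p:ℤ)).and (hagree 0)).exists
    simp only [zpow_zero, Equiv.Perm.one_apply] at hj2
    intro heq
    apply hv0 (ψ j)
    simp only [Function.comp_apply] at hj1 hj2
    rw [hj1, heq, hj2]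
  have hvbwin : ∀ t : ℤ, t ≤ -1 →
      a ((f.toEquiv ^ (t + (p:ℤ))) vb) = a ((f.toEquiv ^ t) vb) := by
    intro t ht
    obtain ⟨j, ⟨hj1, hj2⟩, hj3⟩ := (((hagree (t + (p:ℤ))).and (hagree t)).and
      (eventually_ge_atTop (Int.toNat (-t)))).exists
    simp only [Function.comp_apply] at hj1 hj2
    have hwin : -((ψ j : ℕ) : ℤ) ≤ t := by
      have h1 : ((Int.toNat (-t) : ℕ) : ℤ) ≤ ((ψ j : ℕ) : ℤ) := by
        exact_mod_cast le_trans hj3 hψ.le_apply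
      have h2 : -t ≤ ((Int.toNat (-t) : ℕ) : ℤ) := Int.self_le_toNat _
      linarith
    rw [← hj1, ← hj2, hvwin (ψ j) t hwin ht]
  have hall : ∀ t : ℤ, a ((f.toEquiv ^ (t + (p:ℤ))) vb) = a ((f.toEquiv ^ t) vb) := by
    intro t
    have hq1 : (1:ℤ) ≤ (q:ℤ) := by exact_mod_cast hq
    have hs1 : t - (q:ℤ)*(|t|+1) ≤ -1 := by nlinarith [abs_nonneg t, le_abs_self t]
    have h1 : (f.toEquiv ^ ((t - (q:ℤ)*(|t|+1)) + (p:ℤ))) vb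
        = (f.toEquiv ^ (t + (p:ℤ))) vb := by
      have hh : t + (p:ℤ) = ((t - (q:ℤ)*(|t|+1)) + (p:ℤ)) + (q:ℤ)*(|t|+1) := by ring
      rw [hh, shift_by_fixed f hfixq _ _]
    have h2 : (f.toEquiv ^ (t - (q:ℤ)*(|t|+1))) vb = (f.toEquiv ^ t) vb := by
      have h2' := shift_by_fixed f hfixq (t - (q:ℤ)*(|t|+1)) (|t|+1)
      have hh : t - (q:ℤ) * (|t| + 1) + (q:ℤ) * (|t| + 1) = t := by ring
      rw [hh] at h2'
      exact h2'.symm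
    rw [← h1, ← h2]
    exact hvbwin _ hs1
  exact hvb0 (by simpa using hall 0)


lemma continuous_indicator_clopen {U : Set X} (hU : IsClopen U) [DecidablePred (· ∈ U)] :
    Continuous fun x : X => (if x ∈ U then true else false) := by
  apply IsLocallyConstant.continuous
  intro s
  by_cases ht : true ∈ s <;> by_cases hf : false ∈ s
  · have : (fun x : X => (if x ∈ U then true else false)) ⁻¹' s = univ := by
      ext x; by_cases hx : x ∈ U <;> simp [hx, ht, hf]
    rw [this]; exact isOpen_univ
  · have : (fun x : X => (if x ∈ U then true else false)) ⁻¹' s = U := by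
      ext x; by_cases hx : x ∈ U <;> simp [hx, ht, hf]
    rw [this]; exact hU.2
  · have : (fun x : X => (if x ∈ U then true else false)) ⁻¹' s = Uᶜ := by
      ext x; by_cases hx : x ∈ U <;> simp [hx, ht, hf]
    rw [this]; exact hU.1.isOpen_compl
  · have : (fun x : X => (if x ∈ U then true else false)) ⁻¹' s = ∅ := by
      ext x; by_cases hx : x ∈ U <;> simp [hx, ht, hf]
    rw [this]; exact isOpen_empty

/-- uniform continuity into a discrete space -/

lemma uniform_discrete [CompactSpace X] {B : Type*} [TopologicalSpace B] [DiscreteTopology B]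
    (F : X → B) (hF : Continuous F) :
    ∃ δ > 0, ∀ x y : X, dist x y ≤ δ → F x = F y := by
  have hopen : IsOpen {p : X × X | F p.1 = F p.2} := by
    have : {p : X × X | F p.1 = F p.2} =
        ⋃ b : B, ((fun p : X × X => F p.1) ⁻¹' {b}) ∩ ((fun p : X × X => F p.2) ⁻¹' {b}) := by
      ext p
      simp only [mem_iUnion, mem_inter_iff, mem_preimage, mem_singleton_iff, mem_setOf_eq]
      constructor
      · intro h; exact ⟨F p.2, h, rfl⟩
      · rintro ⟨b, h1, h2⟩; rw [h1, h2]
    rw [this]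
    exact isOpen_iUnion fun b => ((hF.comp continuous_fst).isOpen_preimage _
      (isOpen_discrete _)).inter ((hF.comp continuous_snd).isOpen_preimage _ (isOpen_discrete _))
  set K := {p : X × X | F p.1 = F p.2}ᶜ with hK
  rcases K.eq_empty_or_nonempty with he | hne
  · refine ⟨1, one_pos, fun x y _ => ?_⟩
    by_contra hxy
    have : (x, y) ∈ K := hxy
    rw [he] at this; exact this
  · have hKc : IsCompact K := (hopen.isClosed_compl).isCompact
    have hcd : Continuous fun p : X × X => dist p.1 p.2 := by
      apply Continuous.dist
      · exact continuous_fst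
      · exact continuous_snd
    obtain ⟨p₀, hp₀, hmin⟩ := hKc.exists_isMinOn hne hcd.continuousOn
    have hd : 0 < dist p₀.1 p₀.2 := by
      rcases lt_or_eq_of_le (dist_nonneg : (0:ℝ) ≤ dist p₀.1 p₀.2) with h | h
      · exact h
      · exfalso
        have : p₀.1 = p₀.2 := by rw [← dist_eq_zero]; exact h.symm
        exact hp₀ (by simp [this])
    refine ⟨dist p₀.1 p₀.2 / 2, by linarith, fun x y hxy => ?_⟩
    by_contra hne2
    have hmem : (x, y) ∈ K := hne2
    have h2 : dist p₀.1 p₀.2 ≤ dist x y := hmin hmem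
    linarith



/-- STEP 1: finite clopen covers with small pieces -/
lemma exists_clopen_cover [CompactSpace X] [TotallyDisconnectedSpace X]
    {η : ℝ} (hη : 0 < η) :
    ∃ s : Finset (Set X), (∀ U ∈ s, IsClopen U) ∧ (∀ x : X, ∃ U ∈ s, x ∈ U) ∧
      (∀ U ∈ s, ∀ u v : X, u ∈ U → v ∈ U → dist u v ≤ η) := by
  have hc : ∀ x : X, ∃ V : Set X, IsClopen V ∧ x ∈ V ∧ V ⊆ Metric.ball x (η / 2) := by
    intro x
    exact compact_exists_isClopen_in_isOpen Metric.isOpen_ball (Metric.mem_ball_self (by linarith))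
  choose C hCcl hCx hCsub using hc
  obtain ⟨t, ht⟩ := isCompact_univ.elim_finite_subcover C (fun x => (hCcl x).2)
    (fun x _ => mem_iUnion.2 ⟨x, hCx x⟩)
  refine ⟨t.image C, ?_, ?_, ?_⟩
  · intro U hU
    obtain ⟨x, _, rfl⟩ := Finset.mem_image.1 hU
    exact hCcl x
  · intro x
    have := ht (mem_univ x)
    simp only [mem_iUnion] at this
    obtain ⟨z, hz, hxz⟩ := this
    exact ⟨C z, Finset.mem_image_of_mem C hz, hxz⟩
  · intro U hU u v hu hv
    obtain ⟨z, _, rfl⟩ := Finset.mem_image.1 hU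
    have h1 := hCsub z hu
    have h2 := hCsub z hv
    rw [Metric.mem_ball] at h1 h2
    calc dist u v ≤ dist u z + dist z v := dist_triangle _ _ _
    _ ≤ η / 2 + η / 2 := by rw [dist_comm z v] at *; exact add_le_add h1.le h2.le
    _ = η := by ring



lemma period_reduce (f : X ≃ₜ X) {B : Type*} (a : X → B) {P : ℕ}
    (hPper : ∀ (x : X) (t : ℤ), a ((f.toEquiv ^ (t + (P:ℤ))) x) = a ((f.toEquiv ^ t) x))
    (x : X) (c t : ℤ) : a ((f.toEquiv ^ (t + (P:ℤ)*c)) x) = a ((f.toEquiv ^ t) x) := by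
  induction c using Int.induction_on with
  | zero => norm_num
  | succ k ih =>
      have hre : t + (P:ℤ)*((k:ℤ)+1) = (t + (P:ℤ)*(k:ℤ)) + (P:ℤ) := by ring
      rw [hre, hPper x (t + (P:ℤ)*(k:ℤ)), ih]
  | pred k ih =>
      have h1 := hPper x (t + (P:ℤ)*(-(k:ℤ)-1))
      have hre : (t + (P:ℤ)*(-(k:ℤ)-1)) + (P:ℤ) = t + (P:ℤ)*(-(k:ℤ)) := by ring
      rw [hre] at h1
      rw [← h1, ih]

lemma itin_eq_of_window (f : X ≃ₜ X) {B : Type*} (a : X → B) {P : ℕ} (hP : 0 < P)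
    (hPper : ∀ (x : X) (t : ℤ), a ((f.toEquiv ^ (t + (P:ℤ))) x) = a ((f.toEquiv ^ t) x))
    {y w : X} (h : ∀ i : ℕ, i < P → a ((f.toEquiv ^ (i:ℤ)) y) = a ((f.toEquiv ^ (i:ℤ)) w)) :
    ∀ t : ℤ, a ((f.toEquiv ^ t) y) = a ((f.toEquiv ^ t) w) := by
  intro t
  have hP' : ((P:ℕ):ℤ) ≠ 0 := by exact_mod_cast hP.ne'
  have h0 : (0:ℤ) ≤ t % (P:ℤ) := Int.emod_nonneg t hP'
  have hlt : t % (P:ℤ) < (P:ℤ) := Int.emod_lt_of_pos t (by exact_mod_cast hP)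
  have hdecomp : t = (t % (P:ℤ)) + (P:ℤ) * (t / (P:ℤ)) := (Int.emod_add_mul_ediv t (P:ℤ)).symm
  have hrz : (((t % (P:ℤ)).toNat : ℕ) : ℤ) = t % (P:ℤ) := Int.toNat_of_nonneg h0
  have hrP : (t % (P:ℤ)).toNat < P := by omega
  calc a ((f.toEquiv ^ t) y)
      = a ((f.toEquiv ^ ((t % (P:ℤ)) + (P:ℤ) * (t / (P:ℤ)))) y) := by rw [← hdecomp]
    _ = a ((f.toEquiv ^ (t % (P:ℤ))) y) := period_reduce f a hPper y (t / (P:ℤ)) _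
    _ = a ((f.toEquiv ^ (((t % (P:ℤ)).toNat : ℕ) : ℤ)) y) := by rw [hrz]
    _ = a ((f.toEquiv ^ (((t % (P:ℤ)).toNat : ℕ) : ℤ)) w) := h _ hrP
    _ = a ((f.toEquiv ^ (t % (P:ℤ))) w) := by rw [hrz]
    _ = a ((f.toEquiv ^ ((t % (P:ℤ)) + (P:ℤ) * (t / (P:ℤ)))) w) :=
        (period_reduce f a hPper w (t / (P:ℤ)) _).symm
    _ = a ((f.toEquiv ^ t) w) := by rw [← hdecomp]

/-- invariant clopen classes with small pieces -/
lemma exists_class [CompactSpace X] [TotallyDisconnectedSpace X] (f : X ≃ₜ X)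
    (hper : ∀ x : X, ∃ n : ℕ, 0 < n ∧ (⇑f)^[n] x = x) {η : ℝ} (hη : 0 < η) (z : X) :
    ∃ (W : Set X) (P : ℕ), IsClopen W ∧ z ∈ W ∧ 0 < P ∧
      (∀ x : X, x ∈ W ↔ (f.toEquiv ^ ((P:ℕ):ℤ)) x ∈ W) ∧
      (∀ (j : ℤ) (u w : X), u ∈ W → w ∈ W →
        dist ((f.toEquiv ^ j) u) ((f.toEquiv ^ j) w) ≤ η) := by
  obtain ⟨s, hscl, hscov, hsdiam⟩ := exists_clopen_cover (X := X) hη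
  set a : X → ((↥s) → Bool) := fun x U => if x ∈ (U : Set X) then true else false with ha_def
  have ha : Continuous a := by
    apply continuous_pi
    intro U
    exact continuous_indicator_clopen (hscl U U.2)
  have haprop : ∀ x y : X, a x = a y → dist x y ≤ η := by
    intro x y hxy
    obtain ⟨U, hUs, hxU⟩ := hscov x
    have h1 : a x ⟨U, hUs⟩ = true := if_pos hxU
    have h2 : a y ⟨U, hUs⟩ = true := by rw [← hxy]; exact h1
    have hyU : y ∈ U := by
      by_contra hc
      have : a y ⟨U, hUs⟩ = false := if_neg hc
      rw [h2] at this
      exact Bool.noConfusion this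
    exact hsdiam U hUs x y hxU hyU
  obtain ⟨P, hP, hPper⟩ := uniform_period f hper a ha
  refine ⟨{y : X | ∀ t : ℤ, a ((f.toEquiv ^ t) y) = a ((f.toEquiv ^ t) z)}, P, ?_, ?_, hP, ?_, ?_⟩
  · -- clopen
    have hWeq : {y : X | ∀ t : ℤ, a ((f.toEquiv ^ t) y) = a ((f.toEquiv ^ t) z)}
        = (fun y : X => (fun i : Fin P => a ((f.toEquiv ^ ((i:ℕ):ℤ)) y))) ⁻¹'
          {(fun i : Fin P => a ((f.toEquiv ^ ((i:ℕ):ℤ)) z))} := by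
      ext y
      simp only [mem_setOf_eq, mem_preimage, mem_singleton_iff]
      constructor
      · intro h
        funext i
        exact h _
      · intro h t
        refine itin_eq_of_window f a hP hPper (fun i hi => ?_) t
        exact congrFun h ⟨i, hi⟩
    have hGcont : Continuous (fun y : X => (fun i : Fin P => a ((f.toEquiv ^ ((i:ℕ):ℤ)) y))) :=
      continuous_pi fun i => ha.comp (continuous_zpow f _)
    rw [hWeq]
    exact ⟨(isClosed_discrete _).preimage hGcont,
      hGcont.isOpen_preimage _ (isOpen_discrete _)⟩
  · exact fun t => rfl
  · intro x
    constructor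
    · intro h t
      rw [zpow_apply_comp, hPper x t]
      exact h t
    · intro h t
      have h1 := hPper x t
      rw [← h1]
      have h2 : (f.toEquiv ^ (t + ((P:ℕ):ℤ))) x = (f.toEquiv ^ t) ((f.toEquiv ^ ((P:ℕ):ℤ)) x) :=
        (zpow_apply_comp f t _ x).symm
      rw [h2]
      exact h t
  · intro j u w hu hw
    have : a ((f.toEquiv ^ j) u) = a ((f.toEquiv ^ j) w) := by rw [hu j, hw j]
    exact haprop _ _ this

/-- towers: small clopen sets, invariant under the exact period of their base point,
with disjoint iterates -/
lemma exists_tower [CompactSpace X] [TotallyDisconnectedSpace X] (f : X ≃ₜ X)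
    (hper : ∀ x : X, ∃ n : ℕ, 0 < n ∧ (⇑f)^[n] x = x) {ε : ℝ} (hε : 0 < ε) (z : X) :
    ∃ (V : Set X) (k : ℕ), IsClopen V ∧ z ∈ V ∧ 0 < k ∧ (⇑f)^[k] z = z ∧
      (∀ x : X, x ∈ V ↔ (f.toEquiv ^ ((k:ℕ):ℤ)) x ∈ V) ∧
      (∀ (j : ℤ) (u w : X), u ∈ V → w ∈ V →
        dist ((f.toEquiv ^ j) u) ((f.toEquiv ^ j) w) ≤ ε) ∧
      (∀ i j : ℕ, i < j → j < k → ∀ u w : X, u ∈ V → w ∈ V →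
        (f.toEquiv ^ ((i:ℕ):ℤ)) u ≠ (f.toEquiv ^ ((j:ℕ):ℤ)) w) := by
  have hex := hper z
  set n := Nat.find hex with hn_def
  obtain ⟨hn0, hnfix⟩ := Nat.find_spec hex
  -- distinct orbit points
  have hdistinct : ∀ i j : ℕ, i < j → j < n → (⇑f)^[i] z ≠ (⇑f)^[j] z := by
    intro i j hij hj heq
    have h1 : (⇑f)^[j] z = (⇑f)^[i] ((⇑f)^[j-i] z) := by
      rw [← Function.iterate_add_apply]
      congr 1
      omega
    have hinj : Function.Injective ((⇑f)^[i]) := Function.Injective.iterate f.injective i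
    have h2 : (⇑f)^[j-i] z = z := by
      apply hinj
      rw [← h1, ← heq]
    exact Nat.find_min hex (show j - i < n by omega) ⟨by omega, h2⟩
  -- a scale separating the orbit points
  obtain ⟨η, hη0, hηε, hηsep⟩ : ∃ η : ℝ, 0 < η ∧ η ≤ ε ∧
      ∀ i j : ℕ, i < j → j < n → 3*η ≤ dist ((⇑f)^[i] z) ((⇑f)^[j] z) := by
    set Spr : Finset (ℕ × ℕ) :=
      (Finset.range n ×ˢ Finset.range n).filter (fun pr => pr.1 < pr.2) with hSpr
    by_cases hne : Spr.Nonempty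
    · refine ⟨min ε ((Spr.inf' hne (fun pr => dist ((⇑f)^[pr.1] z) ((⇑f)^[pr.2] z)))/3),
        ?_, min_le_left _ _, ?_⟩
      · apply lt_min hε
        have : 0 < Spr.inf' hne (fun pr => dist ((⇑f)^[pr.1] z) ((⇑f)^[pr.2] z)) := by
          rw [Finset.lt_inf'_iff]
          intro pr hpr
          rw [hSpr] at hpr
          simp only [Finset.mem_filter, Finset.mem_product, Finset.mem_range] at hpr
          exact dist_pos.2 (hdistinct pr.1 pr.2 hpr.2 hpr.1.2)
        linarith
      · intro i j hij hj
        have hmem : (i, j) ∈ Spr := by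
          rw [hSpr]
          simp only [Finset.mem_filter, Finset.mem_product, Finset.mem_range]
          exact ⟨⟨by omega, hj⟩, hij⟩
        have hle := Finset.inf'_le (fun pr => dist ((⇑f)^[pr.1] z) ((⇑f)^[pr.2] z)) hmem
        have hmin : min ε ((Spr.inf' hne fun pr => dist ((⇑f)^[pr.1] z) ((⇑f)^[pr.2] z))/3)
            ≤ (Spr.inf' hne fun pr => dist ((⇑f)^[pr.1] z) ((⇑f)^[pr.2] z))/3 :=
          min_le_right _ _
        linarith
    · refine ⟨ε, hε, le_refl _, ?_⟩
      intro i j hij hj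
      exfalso
      apply hne
      refine ⟨(i, j), ?_⟩
      rw [hSpr]
      simp only [Finset.mem_filter, Finset.mem_product, Finset.mem_range]
      exact ⟨⟨by omega, hj⟩, hij⟩
  obtain ⟨W, P, hWcl, hzW, hP, hWP, hWmesh⟩ := exists_class f hper hη0 z
  -- invariance of W under all multiples of P
  have hWmul : ∀ (c : ℤ) (x : X), x ∈ W ↔ (f.toEquiv ^ ((P:ℤ)*c)) x ∈ W := by
    intro c
    induction c using Int.induction_on with
    | zero => intro x; norm_num
    | succ k ih =>
        intro x
        have hre : (P:ℤ)*((k:ℤ)+1) = (P:ℤ)*(k:ℤ) + (P:ℤ) := by ring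
        rw [hre]
        rw [← zpow_apply_comp]
        constructor
        · intro hx
          exact (ih _).1 ((hWP x).1 hx)
        · intro hx
          exact (hWP x).2 ((ih _).2 hx)
    | pred k ih =>
        intro x
        have hre : (P:ℤ)*(-(k:ℤ)-1) = (P:ℤ)*(-(k:ℤ)) + (-(P:ℤ)) := by ring
        rw [hre, ← zpow_apply_comp]
        have hinvP : ∀ y : X, y ∈ W ↔ (f.toEquiv ^ (-(P:ℤ))) y ∈ W := by
          intro y
          have := hWP ((f.toEquiv ^ (-(P:ℤ))) y)
          rw [zpow_apply_comp] at this
          have hre0 : ((P:ℕ):ℤ) + (-(P:ℤ)) = 0 := by ring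
          rw [hre0, zpow_zero] at this
          simp only [Equiv.Perm.one_apply] at this
          exact ⟨fun hy => this.2 hy, fun hy => this.1 hy⟩
        constructor
        · intro hx
          exact (ih _).1 ((hinvP x).1 hx)
        · intro hx
          exact (hinvP x).2 ((ih _).2 hx)
  -- the base of the tower
  set V : Set X := {x : X | ∀ t : ℤ, (f.toEquiv ^ ((n:ℤ) * t)) x ∈ W} with hV_def
  have hVsubW : V ⊆ W := by
    intro x hx
    have := hx 0
    norm_num at this
    exact this
  have hzV : z ∈ V := by
    intro t
    rw [fixed_zpow_mul f hnfix t]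
    exact hzW
  have hVcl : IsClopen V := by
    have hVeq : V = ⋂ t ∈ Finset.range P, {x : X | (f.toEquiv ^ ((n:ℤ) * (t:ℤ))) x ∈ W} := by
      ext x
      simp only [hV_def, mem_setOf_eq, mem_iInter, Finset.mem_range]
      constructor
      · intro h t _
        exact h t
      · intro h t
        have hP' : ((P:ℕ):ℤ) ≠ 0 := by
          have : (0:ℕ) < P := hP
          omega
        have h0 : (0:ℤ) ≤ t % (P:ℤ) := Int.emod_nonneg t hP'
        have hlt : t % (P:ℤ) < (P:ℤ) := Int.emod_lt_of_pos t (by exact_mod_cast hP)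
        have hrP : (t % (P:ℤ)).toNat < P := by omega
        have hrz : (((t % (P:ℤ)).toNat : ℕ) : ℤ) = t % (P:ℤ) := Int.toNat_of_nonneg h0
        have hbase := h (t % (P:ℤ)).toNat hrP
        rw [hrz] at hbase
        have hkey := (hWmul ((n:ℤ) * (t / (P:ℤ))) ((f.toEquiv ^ ((n:ℤ) * (t % (P:ℤ)))) x)).1 hbase
        rw [zpow_apply_comp] at hkey
        have hre : (P:ℤ) * ((n:ℤ) * (t / (P:ℤ))) + (n:ℤ) * (t % (P:ℤ)) = (n:ℤ) * t := by
          have := Int.emod_add_mul_ediv t (P:ℤ)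
          nlinarith [this]
        rw [hre] at hkey
        exact hkey
    rw [hVeq]
    apply isClopen_biInter_finset
    intro t _
    exact hWcl.preimage (continuous_zpow f _)
  have hVinv : ∀ x : X, x ∈ V ↔ (f.toEquiv ^ ((n:ℕ):ℤ)) x ∈ V := by
    intro x
    constructor
    · intro h t
      rw [zpow_apply_comp]
      have hre : (n:ℤ) * t + (n:ℤ) = (n:ℤ) * (t+1) := by ring
      rw [hre]
      exact h (t+1)
    · intro h t
      have h1 := h (t-1)
      rw [zpow_apply_comp] at h1
      have hre : (n:ℤ) * (t-1) + (n:ℤ) = (n:ℤ) * t := by ring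
      rw [hre] at h1
      exact h1
  refine ⟨V, n, hVcl, hzV, hn0, hnfix, hVinv, ?_, ?_⟩
  · intro j u w hu hw
    calc dist ((f.toEquiv ^ j) u) ((f.toEquiv ^ j) w) ≤ η := hWmesh j u w (hVsubW hu) (hVsubW hw)
    _ ≤ ε := hηε
  · intro i j hij hj u w hu hw heq
    have h1 : dist ((f.toEquiv ^ ((i:ℕ):ℤ)) z) ((f.toEquiv ^ ((i:ℕ):ℤ)) u) ≤ η :=
      hWmesh _ z u hzW (hVsubW hu)
    have h2 : dist ((f.toEquiv ^ ((j:ℕ):ℤ)) w) ((f.toEquiv ^ ((j:ℕ):ℤ)) z) ≤ η :=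
      hWmesh _ w z (hVsubW hw) hzW
    have h3 : dist ((f.toEquiv ^ ((i:ℕ):ℤ)) z) ((f.toEquiv ^ ((j:ℕ):ℤ)) z)
        ≤ dist ((f.toEquiv ^ ((i:ℕ):ℤ)) z) ((f.toEquiv ^ ((i:ℕ):ℤ)) u)
          + dist ((f.toEquiv ^ ((j:ℕ):ℤ)) w) ((f.toEquiv ^ ((j:ℕ):ℤ)) z) := by
      calc dist ((f.toEquiv ^ ((i:ℕ):ℤ)) z) ((f.toEquiv ^ ((j:ℕ):ℤ)) z)
          ≤ dist ((f.toEquiv ^ ((i:ℕ):ℤ)) z) ((f.toEquiv ^ ((i:ℕ):ℤ)) u)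
            + dist ((f.toEquiv ^ ((i:ℕ):ℤ)) u) ((f.toEquiv ^ ((j:ℕ):ℤ)) z) := dist_triangle _ _ _
      _ = dist ((f.toEquiv ^ ((i:ℕ):ℤ)) z) ((f.toEquiv ^ ((i:ℕ):ℤ)) u)
            + dist ((f.toEquiv ^ ((j:ℕ):ℤ)) w) ((f.toEquiv ^ ((j:ℕ):ℤ)) z) := by rw [heq]
    have h4 := hηsep i j hij hj
    rw [← coe_pow_eq_iterate f i z, ← coe_pow_eq_iterate f j z] at h4
    linarith

lemma mem_inv_zpow_mul (f : X ≃ₜ X) {W : Set X} {P : ℕ}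
    (hWP : ∀ x : X, x ∈ W ↔ (f.toEquiv ^ ((P:ℕ):ℤ)) x ∈ W) :
    ∀ (c : ℤ) (x : X), x ∈ W ↔ (f.toEquiv ^ (((P:ℕ):ℤ)*c)) x ∈ W := by
  intro c
  induction c using Int.induction_on with
  | zero => intro x; norm_num
  | succ k ih =>
      intro x
      have hre : (P:ℤ)*((k:ℤ)+1) = (P:ℤ)*(k:ℤ) + (P:ℤ) := by ring
      rw [hre, ← zpow_apply_comp]
      constructor
      · intro hx
        exact (ih _).1 ((hWP x).1 hx)
      · intro hx
        exact (hWP x).2 ((ih _).2 hx)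
  | pred k ih =>
      intro x
      have hre : (P:ℤ)*(-(k:ℤ)-1) = (P:ℤ)*(-(k:ℤ)) + (-(P:ℤ)) := by ring
      rw [hre, ← zpow_apply_comp]
      have hinvP : ∀ y : X, y ∈ W ↔ (f.toEquiv ^ (-((P:ℕ):ℤ))) y ∈ W := by
        intro y
        have := hWP ((f.toEquiv ^ (-((P:ℕ):ℤ))) y)
        rw [zpow_apply_comp] at this
        have hre0 : ((P:ℕ):ℤ) + (-((P:ℕ):ℤ)) = 0 := by ring
        rw [hre0, zpow_zero] at this
        simp only [Equiv.Perm.one_apply] at this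
        exact ⟨fun hy => this.2 hy, fun hy => this.1 hy⟩
      constructor
      · intro hx
        exact (ih _).1 ((hinvP x).1 hx)
      · intro hx
        exact (hinvP x).2 ((ih _).2 hx)

/-- equicontinuity at a given scale -/
lemma exists_uniform [CompactSpace X] [TotallyDisconnectedSpace X] (f : X ≃ₜ X)
    (hper : ∀ x : X, ∃ n : ℕ, 0 < n ∧ (⇑f)^[n] x = x) {η : ℝ} (hη : 0 < η) :
    ∃ δ > 0, ∀ x y : X, dist x y ≤ δ → ∀ t : ℤ,
      dist ((f.toEquiv ^ t) x) ((f.toEquiv ^ t) y) ≤ η := by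
  obtain ⟨s, hscl, hscov, hsdiam⟩ := exists_clopen_cover (X := X) hη
  set a : X → ((↥s) → Bool) := fun x U => if x ∈ (U : Set X) then true else false with ha_def
  have ha : Continuous a := by
    apply continuous_pi
    intro U
    exact continuous_indicator_clopen (hscl U U.2)
  have haprop : ∀ x y : X, a x = a y → dist x y ≤ η := by
    intro x y hxy
    obtain ⟨U, hUs, hxU⟩ := hscov x
    have h1 : a x ⟨U, hUs⟩ = true := if_pos hxU
    have h2 : a y ⟨U, hUs⟩ = true := by rw [← hxy]; exact h1
    have hyU : y ∈ U := by
      by_contra hc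
      have : a y ⟨U, hUs⟩ = false := if_neg hc
      rw [h2] at this
      exact Bool.noConfusion this
    exact hsdiam U hUs x y hxU hyU
  obtain ⟨P, hP, hPper⟩ := uniform_period f hper a ha
  set F : X → Fin P → ((↥s) → Bool) := fun y i => a ((f.toEquiv ^ ((i:ℕ):ℤ)) y) with hF_def
  have hFcont : Continuous F := continuous_pi fun i => ha.comp (continuous_zpow f _)
  obtain ⟨δ, hδ0, hδ⟩ := uniform_discrete F hFcont
  refine ⟨δ, hδ0, fun x y hxy t => ?_⟩
  have hFxy := hδ x y hxy
  have hwin : ∀ i : ℕ, i < P →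
      a ((f.toEquiv ^ ((i:ℕ):ℤ)) x) = a ((f.toEquiv ^ ((i:ℕ):ℤ)) y) :=
    fun i hi => congrFun hFxy ⟨i, hi⟩
  exact haprop _ _ (itin_eq_of_window f a hP hPper hwin t)

end ZD

end ZDAuxSection

set_option maxHeartbeats 1000000 in
/-- If `X` is a compact totally disconnected (zero-dimensional) metric
space and every point is periodic for the homeomorphism `f`, then `f` is
equicontinuous and has the strict periodic shadowing property. -/
theorem equicontinuous_strictPeriodicShadowing_of_all_periodic
    {X : Type*} [MetricSpace X] [CompactSpace X] [TotallyDisconnectedSpace X]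
    (f : X ≃ₜ X) (hper : ∀ x : X, ∃ n : ℕ, 0 < n ∧ (f : X → X)^[n] x = x) :
    EquicontinuousHomeo f ∧ StrictPeriodicShadowing f := by
  classical
  constructor
  · intro ε hε
    exact ZD.exists_uniform f hper hε
  · intro ε hε
    choose V k hVcl hzV hk0 hkfix hVinv hVmesh hVdisj using
      fun z : X => ZD.exists_tower f hper hε z
    obtain ⟨s, hs⟩ := isCompact_univ.elim_finite_subcover V (fun z => (hVcl z).2)
      (fun x _ => Set.mem_iUnion.2 ⟨x, hzV x⟩)
    have hVmul : ∀ (z : X) (c : ℤ) (x : X),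
        x ∈ V z ↔ (f.toEquiv ^ (((k z : ℕ):ℤ)*c)) x ∈ V z :=
      fun z => ZD.mem_inv_zpow_mul f (hVinv z)
    set b : X → (Π z : ↥s, Fin (k ↑z) → Bool) :=
      fun x z j => if (f.toEquiv ^ (-((j:ℕ):ℤ))) x ∈ V ↑z then true else false with hb_def
    have hbtrue : ∀ (u : X) (z : ↥s) (j : Fin (k ↑z)),
        b u z j = true ↔ (f.toEquiv ^ (-((j:ℕ):ℤ))) u ∈ V ↑z := by
      intro u z j
      by_cases h : (f.toEquiv ^ (-((j:ℕ):ℤ))) u ∈ V ↑z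
      · simp [hb_def, h]
      · simp [hb_def, h]
    have hbcont : Continuous b := continuous_pi fun z => continuous_pi fun j =>
      ZD.continuous_indicator_clopen ((hVcl ↑z).preimage (ZD.continuous_zpow f _))
    obtain ⟨δ, hδ0, hδ⟩ := ZD.uniform_discrete b hbcont
    refine ⟨δ, hδ0, ?_⟩
    intro m x hm hcyc hclose
    -- equivariance of the pattern map
    have hbkey : ∀ (u : X) (z : ↥s) (j : Fin (k ↑z)),
        b (f u) z j = b u z ⟨((j:ℕ) + k ↑z - 1) % k ↑z, Nat.mod_lt _ (hk0 ↑z)⟩ := by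
      intro u z j
      have hjK : (j:ℕ) < k ↑z := j.2
      have hk1 : 0 < k (↑z : X) := hk0 ↑z
      have h1K : 1 ≤ (j:ℕ) + k ↑z := by omega
      have hq := congrArg (fun n : ℕ => (n:ℤ)) (Nat.div_add_mod ((j:ℕ) + k ↑z - 1) (k ↑z))
      simp only [Nat.cast_add, Nat.cast_mul, Nat.cast_sub h1K, Nat.cast_one] at hq
      have hcint : (-((((j:ℕ) + k ↑z - 1) % k ↑z : ℕ):ℤ)) = (1 - ((j:ℕ):ℤ))
          + ((k ↑z : ℕ):ℤ) * (((((j:ℕ) + k ↑z - 1) / k ↑z : ℕ):ℤ) - 1) := by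
        have hexp : ((k ↑z : ℕ):ℤ) * (((((j:ℕ) + k ↑z - 1) / k ↑z : ℕ):ℤ) - 1)
            = ((k ↑z : ℕ):ℤ) * ((((j:ℕ) + k ↑z - 1) / k ↑z : ℕ):ℤ) - ((k ↑z : ℕ):ℤ) := by
          ring
        rw [hexp]
        linarith [hq]
      have hfu : f u = (f.toEquiv ^ (1:ℤ)) u := by rw [zpow_one]; rfl
      have hlhs : (f.toEquiv ^ (-((j:ℕ):ℤ))) (f u) = (f.toEquiv ^ (1 - ((j:ℕ):ℤ))) u := by
        rw [hfu, ZD.zpow_apply_comp,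
          show (-((j:ℕ):ℤ)) + 1 = 1 - ((j:ℕ):ℤ) from by ring]
      have hiff : ((f.toEquiv ^ (-((j:ℕ):ℤ))) (f u) ∈ V ↑z) ↔
          ((f.toEquiv ^ (-((((j:ℕ) + k ↑z - 1) % k ↑z : ℕ):ℤ))) u ∈ V ↑z) := by
        rw [hlhs]
        have hmut := hVmul ↑z (((((j:ℕ) + k ↑z - 1) / k ↑z : ℕ):ℤ) - 1)
          ((f.toEquiv ^ (1 - ((j:ℕ):ℤ))) u)
        rw [ZD.zpow_apply_comp] at hmut
        have hre : ((k ↑z : ℕ):ℤ) * (((((j:ℕ) + k ↑z - 1) / k ↑z : ℕ):ℤ) - 1)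
            + (1 - ((j:ℕ):ℤ)) = -((((j:ℕ) + k ↑z - 1) % k ↑z : ℕ):ℤ) := by
          rw [hcint]; ring
        rw [hre] at hmut
        exact hmut
      have e1 := hbtrue (f u) z j
      have e2 := hbtrue u z ⟨((j:ℕ) + k ↑z - 1) % k ↑z, Nat.mod_lt _ (hk0 ↑z)⟩
      by_cases hmem : (f.toEquiv ^ (-((j:ℕ):ℤ))) (f u) ∈ V ↑z
      · rw [e1.2 hmem, e2.2 (hiff.1 hmem)]
      · have t1 : b (f u) z j = false := by
          rw [Bool.eq_false_iff]
          exact fun h => hmem (e1.1 h)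
        have t2 : b u z ⟨((j:ℕ) + k ↑z - 1) % k ↑z, Nat.mod_lt _ (hk0 ↑z)⟩ = false := by
          rw [Bool.eq_false_iff]
          exact fun h => hmem (hiff.2 (e2.1 h))
        rw [t1, t2]
    have hbstep : ∀ u w : X, b u = b w → b (f u) = b (f w) := by
      intro u w h
      funext z j
      rw [hbkey u z j, hbkey w z j, h]
    have hit : ∀ i : ℕ, i ≤ m → b (x i) = b ((⇑f)^[i] (x 0)) := by
      intro i
      induction i with
      | zero => intro _; rfl
      | succ i ih =>
          intro hi
          have h1 : b (f (x i)) = b (x (i+1)) := hδ _ _ (hcyc i (by omega))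
          rw [← h1, hbstep _ _ (ih (by omega)), Function.iterate_succ_apply']
    obtain ⟨z₀, hz₀s, hxz₀⟩ : ∃ z₀ ∈ s, x 0 ∈ V z₀ := by
      have := hs (Set.mem_univ (x 0))
      simpa using this
    have hK0 : 0 < k z₀ := hk0 z₀
    have hbm : b (x 0) = b ((⇑f)^[m] (x 0)) := by
      have := hit m (le_refl m)
      rw [← hclose] at this
      exact this
    have hfm_mem : (f.toEquiv ^ ((m:ℕ):ℤ)) (x 0) ∈ V z₀ := by
      have hb0 : b (x 0) (⟨z₀, hz₀s⟩ : ↥s) ⟨0, hK0⟩ = true := by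
        apply (hbtrue (x 0) ⟨z₀, hz₀s⟩ ⟨0, hK0⟩).2
        show (f.toEquiv ^ (-((0:ℕ):ℤ))) (x 0) ∈ V z₀
        simpa using hxz₀
      have hbm0 : b ((⇑f)^[m] (x 0)) (⟨z₀, hz₀s⟩ : ↥s) ⟨0, hK0⟩ = true := by
        rw [← hbm]; exact hb0
      have hmm := (hbtrue _ ⟨z₀, hz₀s⟩ ⟨0, hK0⟩).1 hbm0
      have hmm2 : (⇑f)^[m] (x 0) ∈ V z₀ := by
        simpa using hmm
      rwa [ZD.coe_pow_eq_iterate]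
    have hKdvd : k z₀ ∣ m := by
      by_contra hnd
      have hr0 : m % k z₀ ≠ 0 := fun h => hnd (Nat.dvd_of_mod_eq_zero h)
      have hrK : m % k z₀ < k z₀ := Nat.mod_lt _ hK0
      have hu : (f.toEquiv ^ (((k z₀ : ℕ):ℤ) * ((m / k z₀ : ℕ):ℤ))) (x 0) ∈ V z₀ :=
        (hVmul z₀ ((m / k z₀ : ℕ):ℤ) (x 0)).1 hxz₀
      have hexp : ((m % k z₀ : ℕ):ℤ) + ((k z₀ : ℕ):ℤ)*((m / k z₀ : ℕ):ℤ) = ((m:ℕ):ℤ) := by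
        have h := congrArg (fun n : ℕ => (n:ℤ)) (Nat.div_add_mod m (k z₀))
        simp only [Nat.cast_add, Nat.cast_mul] at h
        linarith
      have heq2 : (f.toEquiv ^ ((m % k z₀ : ℕ):ℤ))
          ((f.toEquiv ^ (((k z₀ : ℕ):ℤ) * ((m / k z₀ : ℕ):ℤ))) (x 0))
          = (f.toEquiv ^ ((m:ℕ):ℤ)) (x 0) := by
        rw [ZD.zpow_apply_comp, hexp]
      have hne := hVdisj z₀ 0 (m % k z₀) (Nat.pos_of_ne_zero hr0) hrK
        ((f.toEquiv ^ ((m:ℕ):ℤ)) (x 0)) _ hfm_mem hu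
      apply hne
      show (f.toEquiv ^ ((0:ℕ):ℤ)) ((f.toEquiv ^ ((m:ℕ):ℤ)) (x 0)) = _
      simp only [Nat.cast_zero, zpow_zero, Equiv.Perm.one_apply]
      exact heq2.symm
    obtain ⟨c, hc⟩ := hKdvd
    refine ⟨z₀, ?_, ?_⟩
    · have h1 : (⇑f)^[k z₀ * c] z₀ = z₀ := by
        rw [Function.iterate_mul]
        have hcc : ∀ cc : ℕ, ((⇑f)^[k z₀])^[cc] z₀ = z₀ := by
          intro cc
          induction cc with
          | zero => rfl
          | succ cc ih => rw [Function.iterate_succ_apply, hkfix z₀, ih]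
        exact hcc c
      rw [hc]
      exact h1
    · intro i hi
      have hrK : i % k z₀ < k z₀ := Nat.mod_lt _ hK0
      have hexp : ((i % k z₀ : ℕ):ℤ) + ((k z₀ : ℕ):ℤ)*((i / k z₀ : ℕ):ℤ) = ((i:ℕ):ℤ) := by
        have h := congrArg (fun n : ℕ => (n:ℤ)) (Nat.div_add_mod i (k z₀))
        simp only [Nat.cast_add, Nat.cast_mul] at h
        linarith
      have hz₀r : (⇑f)^[i] z₀ = (f.toEquiv ^ ((i % k z₀ : ℕ):ℤ)) z₀ := by
        rw [← ZD.coe_pow_eq_iterate, ← hexp, ← ZD.zpow_apply_comp,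
          ZD.fixed_zpow_mul f (hkfix z₀) ((i / k z₀ : ℕ):ℤ)]
      have hmem_i : (f.toEquiv ^ (-((i % k z₀ : ℕ):ℤ))) (x i) ∈ V z₀ := by
        have hb1 : b ((⇑f)^[i] (x 0)) (⟨z₀, hz₀s⟩ : ↥s) ⟨i % k z₀, hrK⟩ = true := by
          apply (hbtrue _ ⟨z₀, hz₀s⟩ ⟨i % k z₀, hrK⟩).2
          show (f.toEquiv ^ (-((i % k z₀ : ℕ):ℤ))) ((⇑f)^[i] (x 0)) ∈ V z₀
          have h2 : (f.toEquiv ^ (-((i % k z₀ : ℕ):ℤ))) ((⇑f)^[i] (x 0))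
              = (f.toEquiv ^ (((k z₀ : ℕ):ℤ) * ((i / k z₀ : ℕ):ℤ))) (x 0) := by
            rw [← ZD.coe_pow_eq_iterate, ZD.zpow_apply_comp,
              show (-((i % k z₀ : ℕ):ℤ)) + ((i:ℕ):ℤ)
                  = ((k z₀ : ℕ):ℤ) * ((i / k z₀ : ℕ):ℤ) from by linarith [hexp]]
          rw [h2]
          exact (hVmul z₀ ((i / k z₀ : ℕ):ℤ) (x 0)).1 hxz₀
        have hb2 : b (x i) (⟨z₀, hz₀s⟩ : ↥s) ⟨i % k z₀, hrK⟩ = true := by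
          rw [hit i hi]; exact hb1
        exact (hbtrue _ ⟨z₀, hz₀s⟩ ⟨i % k z₀, hrK⟩).1 hb2
      have hxieq : x i = (f.toEquiv ^ ((i % k z₀ : ℕ):ℤ))
          ((f.toEquiv ^ (-((i % k z₀ : ℕ):ℤ))) (x i)) := by
        rw [ZD.zpow_apply_comp,
          show ((i % k z₀ : ℕ):ℤ) + (-((i % k z₀ : ℕ):ℤ)) = 0 from by ring, zpow_zero]
        rfl
      have hfin := hVmesh z₀ ((i % k z₀ : ℕ):ℤ) _ z₀ hmem_i (hzV z₀)
      rw [hz₀r, hxieq]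
      exact hfin
end

section
/- Let (X,d) be a compact metric space. If X is totally disconnected (topological dimension zero), then the identity map id_X : X → X is topologically stable. -/
/-! Common definitions: distances on maps/homeomorphisms of a metric space,
topological stability and shadowing-type properties. -/

variable {X : Type*} [MetricSpace X]

/-- The identity of a compact totally disconnected (zero-dimensional)
metric space is topologically stable. -/
theorem topologicallyStable_id
    (X : Type*) [MetricSpace X] [CompactSpace X] [TotallyDisconnectedSpace X] :
    TopologicallyStable (Homeomorph.refl X) := by
  classical
  intro ε hε
  rcases isEmpty_or_nonempty X with hX | hX
  · refine ⟨1, one_pos, fun g _ => ⟨id, continuous_id, ?_, funext fun x => hX.elim x⟩⟩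
    simpa [dC0, Real.iSup_of_isEmpty] using hε
  · -- clopen neighborhoods of small diameter
    have hV : ∀ x : X, ∃ V : Set X, IsClopen V ∧ x ∈ V ∧ V ⊆ Metric.ball x (ε / 3) :=
      fun x => compact_exists_isClopen_in_isOpen Metric.isOpen_ball
        (Metric.mem_ball_self (by linarith))
    choose V hVclopen hVmem hVball using hV
    obtain ⟨t, ht⟩ := isCompact_univ.elim_finite_subcover V (fun x => (hVclopen x).2)
      (fun x _ => Set.mem_iUnion.2 ⟨x, hVmem x⟩)
    have htne : t.Nonempty := by
      obtain ⟨x⟩ := hX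
      rcases Set.mem_iUnion₂.1 (ht (Set.mem_univ x)) with ⟨j, hj, _⟩
      exact ⟨j, hj⟩
    -- a margin for each clopen piece
    have hδj : ∀ j : X, ∃ δ > 0, ∀ a b : X, dist a b < δ → a ∈ V j → b ∈ V j := by
      intro j
      obtain ⟨δ, hδpos, hsub⟩ := ((hVclopen j).1.isCompact).exists_thickening_subset_open
        (hVclopen j).2 subset_rfl
      refine ⟨δ, hδpos, fun a b hab ha => hsub ?_⟩
      exact Metric.mem_thickening_iff.2 ⟨a, ha, by rwa [dist_comm]⟩
    choose δf hδfpos hδf using hδj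
    set δ : ℝ := t.inf' htne δf with hδdef
    have hδpos : 0 < δ := (Finset.lt_inf'_iff htne).2 fun j _ => hδfpos j
    refine ⟨δ, hδpos, fun g hg => ?_⟩
    -- the signature map
    set σ : X → (t → Bool) := fun x j => (V (j : X)).boolIndicator x with hσdef
    have σcont : Continuous σ :=
      continuous_pi fun j => (continuous_boolIndicator_iff_isClopen _).2 (hVclopen j)
    set rep : (t → Bool) → X := fun b =>
      if hb : ∃ y, σ y = b then Classical.choose hb else Classical.arbitrary X with hrepdef
    set h : X → X := fun x => rep (σ x) with hhdef
    have key : ∀ x, σ (h x) = σ x := by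
      intro x
      have hb : ∃ y, σ y = σ x := ⟨x, rfl⟩
      simp only [hhdef, hrepdef, dif_pos hb]
      exact Classical.choose_spec hb
    have hcont : Continuous h := by
      have : DiscreteTopology (t → Bool) := inferInstance
      exact (continuous_of_discreteTopology (f := rep)).comp σcont
    -- g moves points by less than δ
    have hpt : ∀ x : X, dist x (g x) < δ := by
      intro x
      have bdd : BddAbove (Set.range fun x : X => dist ((Homeomorph.refl X) x) (g x)) :=
        (isCompact_range ((continuous_id.dist g.continuous))).bddAbove
      have h1 : dist ((Homeomorph.refl X) x) (g x) ≤
          dC0 ((Homeomorph.refl X) : X → X) (g : X → X) := le_ciSup bdd x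
      have h2 : dC0 ((Homeomorph.refl X) : X → X) (g : X → X) ≤ DH (Homeomorph.refl X) g :=
        le_max_left _ _
      exact lt_of_le_of_lt (h1.trans h2) hg
    -- σ is g-invariant
    have σg : ∀ x, σ (g x) = σ x := by
      intro x
      funext j
      have hd : dist x (g x) < δf j := (hpt x).trans_le (Finset.inf'_le _ j.2)
      by_cases hx : x ∈ V (j : X)
      · have : g x ∈ V (j : X) := hδf j x (g x) hd hx
        simp [hσdef, Set.boolIndicator, hx, this]
      · have : g x ∉ V (j : X) := fun hgx =>
          hx (hδf j (g x) x (by rwa [dist_comm]) hgx)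
        simp [hσdef, Set.boolIndicator, hx, this]
    refine ⟨h, hcont, ?_, ?_⟩
    · -- h is ε-close to the identity
      have hclose : ∀ x, dist (h x) (id x) ≤ 2 * ε / 3 := by
        intro x
        rcases Set.mem_iUnion₂.1 (ht (Set.mem_univ x)) with ⟨j, hjt, hxj⟩
        have hhx : h x ∈ V j := by
          have := congrFun (key x) ⟨j, hjt⟩
          have hxb : (V j).boolIndicator x = true := (Set.mem_iff_boolIndicator _ _).1 hxj
          have : (V j).boolIndicator (h x) = true := by
            simpa [hσdef, hxb] using this
          exact (Set.mem_iff_boolIndicator _ _).2 this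
        have h1 : dist (h x) j < ε / 3 := Metric.mem_ball.1 (hVball j hhx)
        have h2 : dist x j < ε / 3 := Metric.mem_ball.1 (hVball j hxj)
        calc dist (h x) (id x) ≤ dist (h x) j + dist (id x) j := dist_triangle_right _ _ _
          _ ≤ 2 * ε / 3 := by simp only [id]; linarith
      have : dC0 h id ≤ 2 * ε / 3 := Real.iSup_le hclose (by linarith)
      linarith
    · -- conjugacy
      funext x
      show h (g x) = (Homeomorph.refl X) (h x)
      simp only [Homeomorph.refl_apply, id, hhdef]
      exact congrArg rep (σg x)
end

section
/- Let (X,d) be a Cantor space and let g be a homeomorphism of X whose conjugacy class {φ∘g∘φ⁻¹ : φ a homeomorphism of X} is dense in the space of homeomorphisms of X with the metric D. Then g has no periodic points. -/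
/-! Common definitions: distances on maps/homeomorphisms of a metric space,
topological stability and shadowing-type properties. -/

variable {X : Type*} [MetricSpace X]

section Aux
open Set

namespace OdoAux

/-- successor (adding machine with carry) on `ℕ → Bool`. -/
def osucc (x : ℕ → Bool) : ℕ → Bool := fun n =>
  if ∀ k < n, x k = true then !(x n) else x n

def opred (x : ℕ → Bool) : ℕ → Bool := fun n =>
  if ∀ k < n, x k = false then !(x n) else x n

lemma osucc_prefix {x : ℕ → Bool} {n : ℕ} (h : ∀ k < n, x k = true) :
    osucc x n = !(x n) := by simp only [osucc, if_pos h]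

lemma osucc_not_prefix {x : ℕ → Bool} {n : ℕ} (h : ¬ ∀ k < n, x k = true) :
    osucc x n = x n := by simp only [osucc]; rw [if_neg h]

lemma opred_prefix {x : ℕ → Bool} {n : ℕ} (h : ∀ k < n, x k = false) :
    opred x n = !(x n) := by simp only [opred, if_pos h]

lemma opred_not_prefix {x : ℕ → Bool} {n : ℕ} (h : ¬ ∀ k < n, x k = false) :
    opred x n = x n := by simp only [opred]; rw [if_neg h]

lemma osucc_prefix_iff (x : ℕ → Bool) (n : ℕ) :
    (∀ k < n, osucc x k = false) ↔ (∀ k < n, x k = true) := by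
  constructor
  · intro h
    intro k hk
    induction k using Nat.strong_induction_on with
    | _ k ih =>
      have hpre : ∀ j < k, x j = true := fun j hj => ih j hj (lt_trans hj hk)
      have := h k hk
      rw [osucc_prefix hpre] at this
      simpa using this
  · intro h k hk
    rw [osucc_prefix (fun j hj => h j (lt_trans hj hk))]
    simp [h k hk]

lemma opred_prefix_iff (x : ℕ → Bool) (n : ℕ) :
    (∀ k < n, opred x k = true) ↔ (∀ k < n, x k = false) := by
  constructor
  · intro h
    intro k hk
    induction k using Nat.strong_induction_on with
    | _ k ih =>
      have hpre : ∀ j < k, x j = false := fun j hj => ih j hj (lt_trans hj hk)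
      have := h k hk
      rw [opred_prefix hpre] at this
      simpa using this
  · intro h k hk
    rw [opred_prefix (fun j hj => h j (lt_trans hj hk))]
    simp [h k hk]

lemma opred_osucc (x : ℕ → Bool) : opred (osucc x) = x := by
  funext n
  by_cases h : ∀ k < n, x k = true
  · have h1 : ∀ k < n, osucc x k = false := (osucc_prefix_iff x n).mpr h
    rw [opred_prefix h1, osucc_prefix h, Bool.not_not]
  · have h1 : ¬ ∀ k < n, osucc x k = false := fun hc => h ((osucc_prefix_iff x n).mp hc)
    rw [opred_not_prefix h1, osucc_not_prefix h]

lemma osucc_opred (x : ℕ → Bool) : osucc (opred x) = x := by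
  funext n
  by_cases h : ∀ k < n, x k = false
  · have h1 : ∀ k < n, opred x k = true := (opred_prefix_iff x n).mpr h
    rw [osucc_prefix h1, opred_prefix h, Bool.not_not]
  · have h1 : ¬ ∀ k < n, opred x k = true := fun hc => h ((opred_prefix_iff x n).mp hc)
    rw [osucc_not_prefix h1, opred_not_prefix h]

lemma continuous_aux (F : (ℕ → Bool) → (ℕ → Bool))
    (hF : ∀ n x y, (∀ k ≤ n, x k = y k) → F x n = F y n) : Continuous F := by
  apply continuous_pi
  intro n
  let r : (ℕ → Bool) → (Fin (n+1) → Bool) := fun x j => x j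
  have hr : Continuous r := continuous_pi fun j => continuous_apply _
  let G : (Fin (n+1) → Bool) → Bool := fun v => F (fun k => if h : k < n+1 then v ⟨k, h⟩ else true) n
  have key : (fun x => F x n) = G ∘ r := by
    funext x
    apply hF
    intro k hk
    simp [r, Nat.lt_succ_of_le hk]
  rw [key]
  exact (continuous_of_discreteTopology).comp hr

lemma osucc_dep (n : ℕ) (x y : ℕ → Bool) (h : ∀ k ≤ n, x k = y k) : osucc x n = osucc y n := by
  have hiff : (∀ k < n, x k = true) ↔ (∀ k < n, y k = true) := by
    constructor <;> intro hp k hk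
    · rw [← h k (le_of_lt hk)]; exact hp k hk
    · rw [h k (le_of_lt hk)]; exact hp k hk
  by_cases hc : ∀ k < n, x k = true
  · rw [osucc_prefix hc, osucc_prefix (hiff.mp hc), h n le_rfl]
  · rw [osucc_not_prefix hc, osucc_not_prefix (fun hc2 => hc (hiff.mpr hc2)), h n le_rfl]

lemma opred_dep (n : ℕ) (x y : ℕ → Bool) (h : ∀ k ≤ n, x k = y k) : opred x n = opred y n := by
  have hiff : (∀ k < n, x k = false) ↔ (∀ k < n, y k = false) := by
    constructor <;> intro hp k hk
    · rw [← h k (le_of_lt hk)]; exact hp k hk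
    · rw [h k (le_of_lt hk)]; exact hp k hk
  by_cases hc : ∀ k < n, x k = false
  · rw [opred_prefix hc, opred_prefix (hiff.mp hc), h n le_rfl]
  · rw [opred_not_prefix hc, opred_not_prefix (fun hc2 => hc (hiff.mpr hc2)), h n le_rfl]

/-- The odometer as a homeomorphism of `ℕ → Bool`. -/
def odo : (ℕ → Bool) ≃ₜ (ℕ → Bool) where
  toFun := osucc
  invFun := opred
  left_inv := opred_osucc
  right_inv := osucc_opred
  continuous_toFun := continuous_aux osucc osucc_dep
  continuous_invFun := continuous_aux opred opred_dep

/-- binary value of the first `m` digits -/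
def oval (m : ℕ) (x : ℕ → Bool) : ℕ := ∑ i ∈ Finset.range m, cond (x i) (2^i) 0

lemma oval_succ_modeq (m : ℕ) (x : ℕ → Bool) :
    oval m (osucc x) ≡ oval m x + 1 [MOD 2^m] := by
  by_cases hA : ∀ k < m, x k = true
  · -- all ones: oval m x = 2^m - 1, oval m (osucc x) = 0
    have h1 : oval m x = 2^m - 1 := by
      have : oval m x = ∑ i ∈ Finset.range m, 2^i := by
        apply Finset.sum_congr rfl
        intro i hi
        rw [hA i (Finset.mem_range.mp hi)]
        rfl
      rw [this, Nat.geomSum_eq (le_refl 2)]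
      norm_num
    have h2 : oval m (osucc x) = 0 := by
      apply Finset.sum_eq_zero
      intro i hi
      have := (osucc_prefix_iff x m).mpr hA i (Finset.mem_range.mp hi)
      rw [this]; rfl
    rw [h1, h2]
    have hp : 1 ≤ 2^m := Nat.one_le_two_pow
    have : 2^m - 1 + 1 = 2^m := by omega
    rw [this]
    exact (Nat.modEq_zero_iff_dvd.mpr dvd_rfl).symm
  · -- there is a least j < m with x j = false
    push_neg at hA
    obtain ⟨j, hjm, hxj⟩ := hA
    -- take least such j
    have hex : ∃ j, x j = false := ⟨j, by simpa using hxj⟩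
    set j0 := Nat.find hex with hj0
    have hxj0 : x j0 = false := Nat.find_spec hex
    have hmin : ∀ i < j0, x i = true := by
      intro i hi
      have := Nat.find_min hex hi
      simpa using this
    have hj0m : j0 < m := by
      by_contra hc
      push_neg at hc
      have := hmin j (lt_of_lt_of_le hjm hc)
      rw [this] at hxj
      simp at hxj
    have hsucc_lt : ∀ i < j0, osucc x i = false := by
      intro i hi
      rw [osucc_prefix (fun k hk => hmin k (lt_trans hk hi)), hmin i hi]
      rfl
    have hsucc_j0 : osucc x j0 = true := by
      rw [osucc_prefix hmin, hxj0]
      rfl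
    have hsucc_gt : ∀ i, j0 < i → osucc x i = x i := by
      intro i hi
      apply osucc_not_prefix
      intro hc
      rw [hc j0 hi] at hxj0
      simp at hxj0
    have split : ∀ y : ℕ → Bool,
        oval m y = ∑ i ∈ Finset.range j0, cond (y i) (2^i) 0 + cond (y j0) (2^j0) 0
          + ∑ i ∈ Finset.Ico (j0+1) m, cond (y i) (2^i) 0 := by
      intro y
      rw [oval, Finset.range_eq_Ico,
        ← Finset.sum_Ico_consecutive _ (Nat.zero_le j0) (le_of_lt hj0m),
        Finset.sum_eq_sum_Ico_succ_bot hj0m, ← Finset.range_eq_Ico]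
      ring
    have h1 : oval m (osucc x) = 2^j0 + ∑ i ∈ Finset.Ico (j0+1) m, cond (x i) (2^i) 0 := by
      rw [split]
      rw [Finset.sum_eq_zero (fun i hi => by rw [hsucc_lt i (Finset.mem_range.mp hi)]; rfl),
        hsucc_j0]
      simp only [cond_true, zero_add]
      congr 1
      apply Finset.sum_congr rfl
      intro i hi
      rw [hsucc_gt i (Finset.mem_Ico.mp hi).1]
    have h2 : oval m x = (2^j0 - 1) + ∑ i ∈ Finset.Ico (j0+1) m, cond (x i) (2^i) 0 := by
      rw [split, hxj0]
      simp only [cond_false, add_zero]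
      congr 1
      have : ∑ i ∈ Finset.range j0, cond (x i) (2^i) 0 = ∑ i ∈ Finset.range j0, 2^i := by
        apply Finset.sum_congr rfl
        intro i hi
        rw [hmin i (Finset.mem_range.mp hi)]
        rfl
      rw [this, Nat.geomSum_eq (le_refl 2)]
      norm_num
    have : oval m (osucc x) = oval m x + 1 := by
      rw [h1, h2]
      have : 1 ≤ 2^j0 := Nat.one_le_two_pow
      omega
    rw [this]

lemma oval_lt (m : ℕ) (x : ℕ → Bool) : oval m x < 2^m := by
  have : oval m x ≤ ∑ i ∈ Finset.range m, 2^i := by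
    apply Finset.sum_le_sum
    intro i _
    cases x i <;> simp
  have h2 : ∑ i ∈ Finset.range m, 2^i = 2^m - 1 := by
    rw [Nat.geomSum_eq (le_refl 2)]
    norm_num
  have hp : 1 ≤ 2^m := Nat.one_le_two_pow
  omega

lemma oval_iterate (m p : ℕ) (x : ℕ → Bool) :
    oval m (osucc^[p] x) ≡ oval m x + p [MOD 2^m] := by
  induction p with
  | zero => simp [Nat.ModEq.refl]
  | succ p ih =>
    rw [Function.iterate_succ_apply']
    calc oval m (osucc (osucc^[p] x)) ≡ oval m (osucc^[p] x) + 1 [MOD 2^m] :=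
          oval_succ_modeq m _
      _ ≡ (oval m x + p) + 1 [MOD 2^m] := Nat.ModEq.add_right 1 ih
      _ = oval m x + (p+1) := by ring

lemma osucc_aperiodic (x : ℕ → Bool) (p : ℕ) (hp : 0 < p) : osucc^[p] x ≠ x := by
  intro hper
  obtain ⟨m, hm⟩ : ∃ m, p < 2^m := ⟨p, Nat.lt_two_pow_self⟩
  have h1 : oval m x ≡ oval m x + p [MOD 2^m] := by
    conv_lhs => rw [← hper]
    exact oval_iterate m p x
  have h2 : (2^m : ℕ) ∣ p := by
    have := (Nat.modEq_iff_dvd' (Nat.le_add_right (oval m x) p)).mp h1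
    simpa using this
  have := Nat.le_of_dvd hp h2
  omega

end OdoAux

namespace CantorAux

variable {X : Type*} [MetricSpace X] [CompactSpace X] [PerfectSpace X]
  [TotallyDisconnectedSpace X] [Nonempty X]

/-- A finite clopen partition of `U` into `n` nonempty pieces of diameter `≤ ε`. -/
structure ClPart (X : Type*) [MetricSpace X] (U : Set X) (ε : ℝ) (n : ℕ) where
  C : Fin n → Set X
  clopen : ∀ i, IsClopen (C i)
  nonemp : ∀ i, (C i).Nonempty
  small : ∀ i, ∀ a ∈ C i, ∀ b ∈ C i, dist a b ≤ ε
  disj : ∀ i j, i ≠ j → Disjoint (C i) (C j)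
  covers : ⋃ i, C i = U

lemma two_points_of_open {U : Set X} (hU : IsOpen U) (hne : U.Nonempty) :
    ∃ a ∈ U, ∃ b ∈ U, a ≠ b := by
  obtain ⟨a, ha⟩ := hne
  have h1 : U ∈ nhds a := hU.mem_nhds ha
  have h2 : U \ {a} ∈ nhdsWithin a ({a}ᶜ) := by
    rw [diff_eq, inter_comm]
    exact inter_mem_nhdsWithin _ h1
  obtain ⟨b, hb⟩ := (PerfectSpace.not_isolated a).nonempty_of_mem h2
  exact ⟨a, ha, b, hb.1, fun h => hb.2 h.symm⟩

lemma split_clopen {U : Set X} (hU : IsClopen U) (hne : U.Nonempty) :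
    ∃ V W : Set X, IsClopen V ∧ IsClopen W ∧ V.Nonempty ∧ W.Nonempty ∧
      Disjoint V W ∧ V ∪ W = U := by
  obtain ⟨a, ha, b, hb, hab⟩ := two_points_of_open hU.isOpen hne
  obtain ⟨K, hK, haK, hbK⟩ := exists_isClopen_of_totally_separated hab
  refine ⟨U ∩ K, U \ K, hU.inter hK, hU.diff hK, ⟨a, ha, haK⟩, ⟨b, hb, hbK⟩, ?_, ?_⟩
  · exact disjoint_left.mpr (fun x hx hx2 => hx2.2 hx.2)
  · ext x
    constructor
    · rintro (⟨h1,_⟩|⟨h1,_⟩) <;> exact h1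
    · intro hx
      by_cases hk : x ∈ K
      · exact Or.inl ⟨hx, hk⟩
      · exact Or.inr ⟨hx, hk⟩

lemma exists_clpart (U : Set X) (hU : IsClopen U) (hne : U.Nonempty) {ε : ℝ} (hε : 0 < ε) :
    ∃ n : ℕ, 1 ≤ n ∧ Nonempty (ClPart X U ε n) := by
  classical
  have hcov : ∀ u : U, ∃ V : Set X, IsClopen V ∧ (u : X) ∈ V ∧
      V ⊆ Metric.ball (u : X) (ε/2) ∩ U := fun u =>
    compact_exists_isClopen_in_isOpen ((Metric.isOpen_ball).inter hU.isOpen)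
      ⟨Metric.mem_ball_self (by linarith), u.2⟩
  choose V hV1 hV2 hV3 using hcov
  have hUc : IsCompact U := hU.isClosed.isCompact
  obtain ⟨t, hsub⟩ := hUc.elim_finite_subcover V (fun u => (hV1 u).isOpen)
    (fun x hx => mem_iUnion.mpr ⟨⟨x, hx⟩, hV2 ⟨x, hx⟩⟩)
  set m := t.card with hm
  set φ : Fin m ≃ t := t.equivFin.symm with hφ
  set W : Fin m → Set X := fun i => V (φ i) with hW
  set D : Fin m → Set X := fun i => (W i ∩ U) \ ⋃ j : Fin m, ⋃ (_ : j < i), W j with hD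
  have hWclopen : ∀ i, IsClopen (W i) := fun i => hV1 _
  have hDclopen : ∀ i, IsClopen (D i) := by
    intro i
    refine ((hWclopen i).inter hU).diff ?_
    refine ⟨isClosed_iUnion_of_finite (fun j => ?_), isOpen_iUnion (fun j => ?_)⟩
    · exact isClosed_iUnion_of_finite (fun _ => (hWclopen j).isClosed)
    · exact isOpen_iUnion (fun _ => (hWclopen j).isOpen)
  have hDsmall : ∀ i, ∀ a ∈ D i, ∀ b ∈ D i, dist a b ≤ ε := by
    intro i a ha b hb
    have ha' : a ∈ Metric.ball ((φ i : X)) (ε/2) := (hV3 (φ i) ha.1.1).1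
    have hb' : b ∈ Metric.ball ((φ i : X)) (ε/2) := (hV3 (φ i) hb.1.1).1
    rw [Metric.mem_ball] at ha' hb'
    calc dist a b ≤ dist a (φ i : X) + dist (φ i : X) b := dist_triangle _ _ _
      _ ≤ ε := by rw [dist_comm (φ i : X) b] at *; linarith
  have hDdisj : ∀ i j, i ≠ j → Disjoint (D i) (D j) := by
    intro i j hij
    rcases lt_or_gt_of_ne hij with h | h
    · refine disjoint_left.mpr (fun x hxi hxj => ?_)
      exact hxj.2 (mem_iUnion.mpr ⟨i, mem_iUnion.mpr ⟨h, hxi.1.1⟩⟩)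
    · refine disjoint_left.mpr (fun x hxi hxj => ?_)
      exact hxi.2 (mem_iUnion.mpr ⟨j, mem_iUnion.mpr ⟨h, hxj.1.1⟩⟩)
  have hDcover : ⋃ i, D i = U := by
    apply Subset.antisymm
    · exact iUnion_subset (fun i x hx => hx.1.2)
    · intro x hx
      have hxW : ∃ i, x ∈ W i := by
        have := hsub hx
        rw [mem_iUnion] at this
        obtain ⟨u, hu⟩ := this
        rw [mem_iUnion] at hu
        obtain ⟨hut, hxu⟩ := hu
        refine ⟨φ.symm ⟨u, hut⟩, ?_⟩
        show x ∈ V (φ (φ.symm ⟨u, hut⟩))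
        rw [φ.apply_symm_apply]
        exact hxu
      classical
      obtain ⟨i₀, hi₀, hmin⟩ := Finset.exists_min_image
        (Finset.univ.filter (fun i => x ∈ W i)) id
        ⟨hxW.choose, Finset.mem_filter.mpr ⟨Finset.mem_univ _, hxW.choose_spec⟩⟩
      rw [Finset.mem_filter] at hi₀
      refine mem_iUnion.mpr ⟨i₀, ⟨⟨hi₀.2, hx⟩, ?_⟩⟩
      intro hmem
      rw [mem_iUnion] at hmem
      obtain ⟨j, hj⟩ := hmem
      rw [mem_iUnion] at hj
      obtain ⟨hji, hxj⟩ := hj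
      have := hmin j (Finset.mem_filter.mpr ⟨Finset.mem_univ _, hxj⟩)
      simp only [id] at this
      exact absurd this (not_le_of_gt hji)
  -- keep only nonempty pieces
  classical
  set s : Finset (Fin m) := Finset.univ.filter (fun i => (D i).Nonempty) with hs
  have hscard : 1 ≤ s.card := by
    obtain ⟨x, hx0⟩ := hne
    have hx : x ∈ ⋃ i, D i := hDcover ▸ hx0
    rw [mem_iUnion] at hx
    obtain ⟨i, hi⟩ := hx
    exact Finset.card_pos.mpr ⟨i, Finset.mem_filter.mpr ⟨Finset.mem_univ _, ⟨x, hi⟩⟩⟩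
  set ψ : Fin s.card ≃ s := s.equivFin.symm with hψ
  refine ⟨s.card, hscard, ⟨⟨fun k => D (ψ k), fun k => hDclopen _, ?_, fun k => hDsmall _, ?_, ?_⟩⟩⟩
  · intro k
    have h2 := (ψ k).2
    exact (Finset.mem_filter.mp h2).2
  · intro k k' hkk'
    apply hDdisj
    intro h
    exact hkk' (ψ.injective (Subtype.ext h))
  · apply Subset.antisymm
    · rw [← hDcover]
      exact iUnion_subset (fun k => subset_iUnion D (ψ k : Fin m))
    · rw [← hDcover]
      intro x hx
      rw [mem_iUnion] at hx
      obtain ⟨i, hi⟩ := hx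
      have hmem : i ∈ s := Finset.mem_filter.mpr ⟨Finset.mem_univ _, ⟨x, hi⟩⟩
      exact mem_iUnion.mpr ⟨ψ.symm ⟨i, hmem⟩, by
        have : ψ (ψ.symm ⟨i, hmem⟩) = ⟨i, hmem⟩ := ψ.apply_symm_apply _
        rw [this]
        exact hi⟩


lemma pad_clpart {U : Set X} {ε : ℝ} {n : ℕ} (hn : 1 ≤ n) (P : ClPart X U ε n) :
    Nonempty (ClPart X U ε (n+1)) := by
  classical
  set i0 : Fin n := ⟨0, hn⟩ with hi0
  obtain ⟨V, W, hVc, hWc, hVne, hWne, hVW, hVWU⟩ :=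
    split_clopen (P.clopen i0) (P.nonemp i0)
  have hVsub : V ⊆ P.C i0 := by rw [← hVWU]; exact subset_union_left
  have hWsub : W ⊆ P.C i0 := by rw [← hVWU]; exact subset_union_right
  set C0 : Fin n → Set X := Function.update P.C i0 V with hC0
  set C : Fin (n+1) → Set X := Fin.snoc C0 W with hC
  have hC0sub : ∀ j, C0 j ⊆ P.C j := by
    intro j
    by_cases h : j = i0
    · rw [hC0, h, Function.update_self]; exact hVsub
    · rw [hC0, Function.update_of_ne h]
  have hcase : ∀ k : Fin (n+1), (∃ j : Fin n, k = Fin.castSucc j ∧ C k = C0 j) ∨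
      (k = Fin.last n ∧ C k = W) := by
    intro k
    refine Fin.lastCases ?_ ?_ k
    · exact Or.inr ⟨rfl, by rw [hC]; simp⟩
    · intro j
      exact Or.inl ⟨j, rfl, by rw [hC]; simp⟩
  have hCclopen : ∀ k, IsClopen (C k) := by
    intro k
    rcases hcase k with ⟨j, _, hE⟩ | ⟨_, hE⟩
    · rw [hE, hC0]
      by_cases h : j = i0
      · rw [h, Function.update_self]; exact hVc
      · rw [Function.update_of_ne h]; exact P.clopen j
    · rw [hE]; exact hWc
  have hCne : ∀ k, (C k).Nonempty := by
    intro k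
    rcases hcase k with ⟨j, _, hE⟩ | ⟨_, hE⟩
    · rw [hE, hC0]
      by_cases h : j = i0
      · rw [h, Function.update_self]; exact hVne
      · rw [Function.update_of_ne h]; exact P.nonemp j
    · rw [hE]; exact hWne
  have hCsub : ∀ k, ∃ j : Fin n, C k ⊆ P.C j := by
    intro k
    rcases hcase k with ⟨j, _, hE⟩ | ⟨_, hE⟩
    · exact ⟨j, hE ▸ hC0sub j⟩
    · exact ⟨i0, hE ▸ hWsub⟩
  refine ⟨⟨C, hCclopen, hCne, ?_, ?_, ?_⟩⟩
  · intro k a ha b hb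
    obtain ⟨j, hj⟩ := hCsub k
    exact P.small j a (hj ha) b (hj hb)
  · -- disjointness
    intro k k' hkk'
    rcases hcase k with ⟨j, hk, hE⟩ | ⟨hk, hE⟩ <;>
      rcases hcase k' with ⟨j', hk', hE'⟩ | ⟨hk', hE'⟩
    · rw [hE, hE']
      have hjj' : j ≠ j' := by
        intro h; exact hkk' (by rw [hk, hk', h])
      by_cases h : j = i0
      · by_cases h' : j' = i0
        · exact absurd (h.trans h'.symm) hjj'
        · rw [hC0, h, Function.update_self, Function.update_of_ne h']
          exact Disjoint.mono hVsub (subset_refl _) (P.disj i0 j' (fun hc => h' hc.symm))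
      · by_cases h' : j' = i0
        · rw [hC0, h', Function.update_of_ne h, Function.update_self]
          exact Disjoint.mono (subset_refl _) hVsub (P.disj j i0 h)
        · rw [hC0, Function.update_of_ne h, Function.update_of_ne h']
          exact P.disj j j' hjj'
    · rw [hE, hE']
      by_cases h : j = i0
      · rw [hC0, h, Function.update_self]; exact hVW
      · rw [hC0, Function.update_of_ne h]
        exact Disjoint.mono (subset_refl _) hWsub (P.disj j i0 h)
    · rw [hE, hE']
      by_cases h' : j' = i0
      · rw [hC0, h', Function.update_self]; exact hVW.symm
      · rw [hC0, Function.update_of_ne h']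
        exact Disjoint.mono hWsub (subset_refl _) (P.disj i0 j' (fun hc => h' hc.symm))
    · exact absurd (hk.trans hk'.symm) hkk'
  · -- covers
    apply Subset.antisymm
    · intro x hx
      rw [mem_iUnion] at hx
      obtain ⟨k, hk⟩ := hx
      obtain ⟨j, hj⟩ := hCsub k
      rw [← P.covers]
      exact mem_iUnion.mpr ⟨j, hj hk⟩
    · intro x hx
      rw [← P.covers, mem_iUnion] at hx
      obtain ⟨j, hj⟩ := hx
      by_cases h : j = i0
      · rw [h, ← hVWU] at hj
        rcases hj with hj | hj
        · refine mem_iUnion.mpr ⟨Fin.castSucc i0, ?_⟩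
          rw [hC]
          simp only [Fin.snoc_castSucc]
          rw [hC0, Function.update_self]
          exact hj
        · refine mem_iUnion.mpr ⟨Fin.last n, ?_⟩
          rw [hC]
          simp only [Fin.snoc_last]
          exact hj
      · refine mem_iUnion.mpr ⟨Fin.castSucc j, ?_⟩
        rw [hC]
        simp only [Fin.snoc_castSucc]
        rw [hC0, Function.update_of_ne h]
        exact hj

lemma exists_clpart_ge (U : Set X) (hU : IsClopen U) (hne : U.Nonempty) {ε : ℝ} (hε : 0 < ε) :
    ∃ n : ℕ, 1 ≤ n ∧ ∀ N, n ≤ N → Nonempty (ClPart X U ε N) := by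
  obtain ⟨n, hn1, hP⟩ := exists_clpart U hU hne hε
  refine ⟨n, hn1, ?_⟩
  intro N hN
  induction N with
  | zero => omega
  | succ N ih =>
    rcases Nat.lt_or_ge n (N+1) with h | h
    · have hN' : n ≤ N := by omega
      obtain ⟨P⟩ := ih hN'
      exact pad_clpart (le_trans hn1 hN') P
    · have : n = N + 1 := by omega
      exact this ▸ hP

/-- Partition indexed by `Fin t → Bool`. -/
lemma exists_bool_clpart (U : Set X) (hU : IsClopen U) (hne : U.Nonempty) {ε : ℝ} (hε : 0 < ε) :
    ∃ t : ℕ, ∀ t', t ≤ t' → ∃ C : (Fin t' → Bool) → Set X,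
      (∀ v, IsClopen (C v)) ∧ (∀ v, (C v).Nonempty) ∧
      (∀ v, ∀ a ∈ C v, ∀ b ∈ C v, dist a b ≤ ε) ∧
      (∀ v w, v ≠ w → Disjoint (C v) (C w)) ∧ ⋃ v, C v = U := by
  obtain ⟨n, hn1, hP⟩ := exists_clpart_ge U hU hne hε
  refine ⟨n, ?_⟩
  intro t' ht'
  have h2 : n ≤ 2^t' := le_trans ht' (Nat.le_of_lt (Nat.lt_two_pow_self (n := t')))
  obtain ⟨P⟩ := hP (2^t') h2
  set e : (Fin t' → Bool) ≃ Fin (2^t') :=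
    (Equiv.arrowCongr (Equiv.refl (Fin t')) finTwoEquiv.symm).trans finFunctionFinEquiv with he
  refine ⟨fun v => P.C (e v), fun v => P.clopen _, fun v => P.nonemp _,
    fun v => P.small _, ?_, ?_⟩
  · intro v w hvw
    exact P.disj _ _ (fun h => hvw (e.injective h))
  · have := e.surjective.iUnion_comp (fun i => P.C i)
    simp only at this ⊢
    rw [this, P.covers]

/-- A global clopen partition of `X` indexed by binary strings of length `L`. -/
structure PSys (X : Type*) [MetricSpace X] where
  L : ℕ
  B : (Fin L → Bool) → Set X
  clopen : ∀ v, IsClopen (B v)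
  nonemp : ∀ v, (B v).Nonempty
  disj : ∀ v w, v ≠ w → Disjoint (B v) (B w)
  covers : ⋃ v, B v = univ

lemma psys_step (P : PSys X) {ε : ℝ} (hε : 0 < ε) :
    ∃ Q : PSys X, ∃ h : P.L < Q.L,
      (∀ w, Q.B w ⊆ P.B (fun j => w (Fin.castLE (le_of_lt h) j))) ∧
      (∀ w, ∀ a ∈ Q.B w, ∀ b ∈ Q.B w, dist a b ≤ ε) := by
  classical
  -- for each piece, a threshold t_v
  have hstep : ∀ v : Fin P.L → Bool, ∃ t : ℕ, ∀ t', t ≤ t' →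
      ∃ C : (Fin t' → Bool) → Set X,
      (∀ u, IsClopen (C u)) ∧ (∀ u, (C u).Nonempty) ∧
      (∀ u, ∀ a ∈ C u, ∀ b ∈ C u, dist a b ≤ ε) ∧
      (∀ u u', u ≠ u' → Disjoint (C u) (C u')) ∧ ⋃ u, C u = P.B v :=
    fun v => exists_bool_clpart (P.B v) (P.clopen v) (P.nonemp v) hε
  choose tv htv using hstep
  set t : ℕ := max 1 (Finset.univ.sup tv) with ht
  have ht1 : 1 ≤ t := le_max_left _ _
  have htv' : ∀ v, tv v ≤ t := fun v =>
    le_trans (Finset.le_sup (Finset.mem_univ v)) (le_max_right _ _)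
  choose Cv hC1 hC2 hC3 hC4 hC5 using fun v => htv v t (htv' v)
  -- assemble
  set E : (Fin (P.L + t) → Bool) ≃ (Fin P.L → Bool) × (Fin t → Bool) :=
    ((Equiv.arrowCongr finSumFinEquiv.symm (Equiv.refl Bool)).trans
      (Equiv.sumArrowEquivProdArrow _ _ Bool)) with hE
  have hE1 : ∀ (w : Fin (P.L + t) → Bool) (j : Fin P.L),
      (E w).1 j = w (Fin.castAdd t j) := fun w j => rfl
  have hE2 : ∀ (w : Fin (P.L + t) → Bool) (j : Fin t),
      (E w).2 j = w (Fin.natAdd P.L j) := fun w j => rfl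
  have hLlt : P.L < P.L + t := by omega
  refine ⟨⟨P.L + t, fun w => Cv (E w).1 (E w).2, fun w => hC1 _ _, fun w => hC2 _ _,
    ?_, ?_⟩, hLlt, ?_, fun w => hC3 _ _⟩
  · -- disjoint
    intro v w hvw
    show Disjoint (Cv (E v).1 (E v).2) (Cv (E w).1 (E w).2)
    by_cases h1 : (E v).1 = (E w).1
    · have h2 : (E v).2 ≠ (E w).2 := by
        intro h2
        exact hvw (E.injective (Prod.ext h1 h2))
      rw [h1]
      exact hC4 _ _ _ h2
    · have hsubv : Cv (E v).1 (E v).2 ⊆ P.B (E v).1 := by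
        rw [← hC5 (E v).1]; exact subset_iUnion _ _
      have hsubw : Cv (E w).1 (E w).2 ⊆ P.B (E w).1 := by
        rw [← hC5 (E w).1]; exact subset_iUnion _ _
      exact Disjoint.mono hsubv hsubw (P.disj _ _ h1)
  · -- covers
    apply Subset.antisymm (subset_univ _)
    intro x _
    have hx : x ∈ ⋃ v, P.B v := by rw [P.covers]; trivial
    rw [mem_iUnion] at hx
    obtain ⟨v, hv⟩ := hx
    have : x ∈ ⋃ u, Cv v u := by rw [hC5]; exact hv
    rw [mem_iUnion] at this
    obtain ⟨u, hu⟩ := this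
    refine mem_iUnion.mpr ⟨E.symm (v, u), ?_⟩
    show x ∈ Cv (E (E.symm (v,u))).1 (E (E.symm (v,u))).2
    rw [E.apply_symm_apply]
    exact hu
  · -- refinement
    intro w x hx
    have hsub : Cv (E w).1 (E w).2 ⊆ P.B (E w).1 := by
      rw [← hC5 (E w).1]; exact subset_iUnion _ _
    have : (fun j => w (Fin.castLE (le_of_lt hLlt) j)) = (E w).1 := by
      funext j
      rw [hE1]
      congr 1
    rw [this]
    exact hsub hx

variable (X)

noncomputable def psysZero : PSys X where
  L := 0
  B := fun _ => univ
  clopen := fun _ => isClopen_univ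
  nonemp := fun _ => univ_nonempty
  disj := fun v w hvw => absurd (funext fun j => j.elim0) hvw
  covers := by rw [iUnion_const]

noncomputable def psysSeq : ℕ → PSys X := fun n =>
  Nat.rec (psysZero X)
    (fun k P => (psys_step P (by positivity : (0:ℝ) < 1/((k:ℝ)+1))).choose) n

lemma psysSeq_spec (k : ℕ) :
    ∃ h : (psysSeq X k).L < (psysSeq X (k+1)).L,
      (∀ w, (psysSeq X (k+1)).B w ⊆
        (psysSeq X k).B (fun j => w (Fin.castLE (le_of_lt h) j))) ∧
      (∀ w, ∀ a ∈ (psysSeq X (k+1)).B w, ∀ b ∈ (psysSeq X (k+1)).B w,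
        dist a b ≤ 1/((k:ℝ)+1)) :=
  (psys_step (psysSeq X k) (by positivity : (0:ℝ) < 1/((k:ℝ)+1))).choose_spec

lemma psysSeq_L_lt (k : ℕ) : (psysSeq X k).L < (psysSeq X (k+1)).L :=
  (psysSeq_spec X k).choose

lemma psysSeq_L_mono : Monotone (fun k => (psysSeq X k).L) := by
  apply monotone_nat_of_le_succ
  intro k
  exact le_of_lt (psysSeq_L_lt X k)

lemma psysSeq_L_ge (k : ℕ) : k ≤ (psysSeq X k).L := by
  induction k with
  | zero => omega
  | succ k ih => exact lt_of_le_of_lt ih (psysSeq_L_lt X k)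

variable {X}

lemma label_exists (k : ℕ) (x : X) : ∃ v, x ∈ (psysSeq X k).B v := by
  have : x ∈ ⋃ v, (psysSeq X k).B v := by rw [(psysSeq X k).covers]; trivial
  rwa [mem_iUnion] at this

noncomputable def label (k : ℕ) (x : X) : Fin ((psysSeq X k).L) → Bool :=
  (label_exists k x).choose

lemma label_mem (k : ℕ) (x : X) : x ∈ (psysSeq X k).B (label k x) :=
  (label_exists k x).choose_spec

lemma label_unique {k : ℕ} {x : X} {v : Fin ((psysSeq X k).L) → Bool}
    (hv : x ∈ (psysSeq X k).B v) : v = label k x := by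
  by_contra h
  exact disjoint_left.mp ((psysSeq X k).disj v (label k x) h) hv (label_mem k x)

lemma label_succ (k : ℕ) (x : X) :
    (fun j => label (k+1) x (Fin.castLE (le_of_lt (psysSeq_L_lt X k)) j)) = label k x := by
  apply label_unique
  obtain ⟨h, href, _⟩ := psysSeq_spec X k
  exact href (label (k+1) x) (label_mem (k+1) x)

lemma label_le {k k' : ℕ} (h : k ≤ k') (x : X) :
    (fun j => label k' x (Fin.castLE (psysSeq_L_mono X h) j)) = label k x := by
  induction k' with
  | zero =>
    have hk : k = 0 := by omega
    subst hk
    funext j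
    congr 1
  | succ k' ih =>
    rcases Nat.lt_or_ge k (k'+1) with h1 | h1
    · have h2 : k ≤ k' := by omega
      rw [← ih h2, ← label_succ k' x]
      funext j
      congr 1
    · have hk : k = k' + 1 := by omega
      subst hk
      funext j
      congr 1

noncomputable def emap (x : X) : ℕ → Bool := fun i =>
  label (i+1) x ⟨i, lt_of_lt_of_le (Nat.lt_succ_self i) (psysSeq_L_ge X (i+1))⟩

lemma label_emap (k : ℕ) (x : X) (j : Fin ((psysSeq X k).L)) :
    label k x j = emap x (j : ℕ) := by
  set K := max k ((j : ℕ)+1) with hK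
  have h1 : k ≤ K := le_max_left _ _
  have h2 : (j : ℕ) + 1 ≤ K := le_max_right _ _
  have hj1 : ((j : ℕ)) < (psysSeq X ((j : ℕ)+1)).L :=
    lt_of_lt_of_le (Nat.lt_succ_self _) (psysSeq_L_ge X _)
  have e1 := congrFun (label_le h1 x) j
  have e2 := congrFun (label_le h2 x) (⟨(j : ℕ), hj1⟩ : Fin ((psysSeq X ((j:ℕ)+1)).L))
  simp only at e1 e2
  rw [← e1]
  rw [show emap x (j:ℕ) = label ((j:ℕ)+1) x ⟨(j:ℕ), hj1⟩ from rfl]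
  rw [← e2]
  congr 1

lemma emap_label (k : ℕ) (x y : X) (h : emap x = emap y) :
    label k x = label k y := by
  funext j
  rw [label_emap, label_emap, h]

lemma emap_injective : Function.Injective (emap (X := X)) := by
  intro x y h
  have key : ∀ k : ℕ, dist x y ≤ 1/((k:ℝ)+1) := by
    intro k
    obtain ⟨hlt, _, hsmall⟩ := psysSeq_spec X k
    have hx := label_mem (k+1) x
    have hy := label_mem (k+1) y
    rw [emap_label (k+1) x y h] at hx
    exact hsmall (label (k+1) y) x hx y hy
  by_contra hne
  have hpos : 0 < dist x y := dist_pos.mpr hne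
  obtain ⟨k, hk⟩ := exists_nat_one_div_lt hpos
  exact absurd (key k) (not_le.mpr hk)

lemma emap_surjective : Function.Surjective (emap (X := X)) := by
  intro y
  set T : ℕ → Set X := fun k => (psysSeq X k).B (fun j => y (j : ℕ)) with hT
  have hdec : ∀ k, T (k+1) ⊆ T k := by
    intro k
    obtain ⟨hlt, href, _⟩ := psysSeq_spec X k
    intro x hx
    have := href _ hx
    convert this using 2
    rfl
  have hne : ∀ k, (T k).Nonempty := fun k => (psysSeq X k).nonemp _
  have hcl : ∀ k, IsClosed (T k) := fun k => ((psysSeq X k).clopen _).isClosed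
  obtain ⟨x, hx⟩ := IsCompact.nonempty_iInter_of_sequence_nonempty_isCompact_isClosed
    T hdec hne ((hcl 0).isCompact) hcl
  refine ⟨x, ?_⟩
  funext i
  have hxi : x ∈ T (i+1) := mem_iInter.mp hx (i+1)
  have := label_unique hxi
  show label (i+1) x _ = y i
  rw [← this]

lemma emap_continuous : Continuous (emap (X := X)) := by
  apply continuous_pi
  intro i
  rw [continuous_discrete_rng]
  intro b
  have : (fun x => emap x i) ⁻¹' {b} =
      ⋃ (v : {v : Fin ((psysSeq X (i+1)).L) → Bool //
        v ⟨i, lt_of_lt_of_le (Nat.lt_succ_self i) (psysSeq_L_ge X (i+1))⟩ = b}),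
        (psysSeq X (i+1)).B v := by
    ext x
    simp only [mem_preimage, mem_singleton_iff, mem_iUnion]
    constructor
    · intro hx
      exact ⟨⟨label (i+1) x, hx⟩, label_mem (i+1) x⟩
    · rintro ⟨⟨v, hv⟩, hxv⟩
      have := label_unique hxv
      show label (i+1) x _ = b
      rw [← this]
      exact hv
  rw [this]
  exact isOpen_iUnion (fun v => ((psysSeq X (i+1)).clopen _).isOpen)

/-- The homeomorphism from a Cantor space to `ℕ → Bool`. -/
noncomputable def cantorHomeo : X ≃ₜ (ℕ → Bool) :=
  Continuous.homeoOfEquivCompactToT2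
    (f := Equiv.ofBijective emap ⟨emap_injective, emap_surjective⟩) emap_continuous

end CantorAux
section FinalAux

variable {X : Type*} [MetricSpace X] [CompactSpace X]

/-- iterate-comparison: if `h` is uniformly `C⁰`-close to `f` then iterates stay close. -/
lemma chain_lemma (f : X → X) (hf : Continuous f) (k : ℕ) {γ : ℝ} (hγ : 0 < γ) :
    ∃ δ > 0, ∀ (h : X → X) (p : X), (∀ y, dist (h y) (f y) < δ) →
      dist (h^[k] p) (f^[k] p) < γ := by
  induction k generalizing γ with
  | zero =>
    exact ⟨γ, hγ, fun h p _ => by simpa using hγ⟩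
  | succ k ih =>
    have huc := CompactSpace.uniformContinuous_of_continuous hf
    rw [Metric.uniformContinuous_iff] at huc
    obtain ⟨γ', hγ', hγ'2⟩ := huc (γ/2) (by linarith)
    obtain ⟨δ₀, hδ₀, hδ₀2⟩ := ih hγ'
    refine ⟨min δ₀ (γ/2), lt_min hδ₀ (by linarith), ?_⟩
    intro h p hcl
    have hcl' : ∀ y, dist (h y) (f y) < δ₀ :=
      fun y => lt_of_lt_of_le (hcl y) (min_le_left _ _)
    have h1 : dist (h^[k] p) (f^[k] p) < γ' := hδ₀2 h p hcl'
    rw [Function.iterate_succ_apply', Function.iterate_succ_apply']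
    calc dist (h (h^[k] p)) (f (f^[k] p))
        ≤ dist (h (h^[k] p)) (f (h^[k] p)) + dist (f (h^[k] p)) (f (f^[k] p)) :=
          dist_triangle _ _ _
      _ < γ/2 + γ/2 := add_lt_add
          (lt_of_lt_of_le (hcl _) (min_le_right _ _)) (hγ'2 h1)
      _ = γ := by ring

lemma conj_iterate (g φ : X ≃ₜ X) (m : ℕ) (y : X) :
    (↑(φ.symm.trans (g.trans φ)) : X → X)^[m] y = φ ((g : X → X)^[m] (φ.symm y)) := by
  induction m with
  | zero => simp
  | succ m ih =>
    rw [Function.iterate_succ_apply', ih, Function.iterate_succ_apply']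
    simp [Homeomorph.trans_apply]

lemma homeo_iterate (e : X ≃ₜ (ℕ → Bool)) (σ : (ℕ → Bool) ≃ₜ (ℕ → Bool)) (m : ℕ) (y : X) :
    (↑((e.trans σ).trans e.symm) : X → X)^[m] y = e.symm ((σ : _ → _)^[m] (e y)) := by
  induction m with
  | zero => simp
  | succ m ih =>
    rw [Function.iterate_succ_apply', ih, Function.iterate_succ_apply']
    simp [Homeomorph.trans_apply]

end FinalAux


end Aux

/-- On a Cantor space, a homeomorphism whose conjugacy class is
`D`-dense in the space of homeomorphisms has no periodic points. -/
theorem no_periodic_points_of_dense_conjugacy_class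
    {X : Type*} [MetricSpace X] [CompactSpace X] [PerfectSpace X]
    [TotallyDisconnectedSpace X] [Nonempty X] (g : X ≃ₜ X)
    (hdense : ∀ f : X ≃ₜ X, ∀ ε > 0,
      ∃ φ : X ≃ₜ X, DH (φ.symm.trans (g.trans φ)) f < ε) :
    ∀ (x : X) (n : ℕ), 0 < n → (g : X → X)^[n] x ≠ x := by
  intro x n hn hper
  -- the aperiodic "odometer" homeomorphism of X
  set e : X ≃ₜ (ℕ → Bool) := CantorAux.cantorHomeo with he
  set f : X ≃ₜ X := (e.trans OdoAux.odo).trans e.symm with hf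
  have hfaper : ∀ p : X, (f : X → X)^[n] p ≠ p := by
    intro p hp
    rw [hf, homeo_iterate] at hp
    have : (OdoAux.odo : (ℕ → Bool) → (ℕ → Bool))^[n] (e p) = e p := by
      have := congrArg e hp
      rwa [Homeomorph.apply_symm_apply] at this
    exact OdoAux.osucc_aperiodic (e p) n hn this
  -- minimal displacement of f^[n]
  have hcont : Continuous (fun p : X => dist ((f : X → X)^[n] p) p) :=
    Continuous.dist (f.continuous.iterate n) continuous_id
  obtain ⟨p₀, -, hp₀⟩ := isCompact_univ.exists_isMinOn Set.univ_nonempty hcont.continuousOn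
  set c : ℝ := dist ((f : X → X)^[n] p₀) p₀ with hc
  have hcpos : 0 < c := dist_pos.mpr (hfaper p₀)
  -- closeness threshold
  obtain ⟨δ, hδ, hδ2⟩ := chain_lemma (f : X → X) f.continuous n hcpos
  -- a conjugate of g close to f
  obtain ⟨φ, hφ⟩ := hdense f δ hδ
  set h : X ≃ₜ X := φ.symm.trans (g.trans φ) with hh
  have hclose : ∀ y : X, dist (h y) (f y) < δ := by
    intro y
    have hb : BddAbove (Set.range fun y : X => dist (h y) (f y)) :=
      (isCompact_range (Continuous.dist h.continuous f.continuous)).bddAbove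
    have h1 : dist (h y) (f y) ≤ dC0 (h : X → X) (f : X → X) := le_ciSup hb y
    have h2 : dC0 (h : X → X) (f : X → X) ≤ DH h f := le_max_left _ _
    exact lt_of_le_of_lt (h1.trans h2) hφ
  -- the conjugate has a periodic point
  have hper2 : (h : X → X)^[n] (φ x) = φ x := by
    rw [hh, conj_iterate]
    rw [Homeomorph.symm_apply_apply, hper]
  have := hδ2 (h : X → X) (φ x) hclose
  rw [hper2] at this
  rw [dist_comm] at this
  exact absurd this (not_lt.mpr (hp₀ (Set.mem_univ (φ x))))
end

section
/- Let X = {0,1}^ℕ with the metric d(x,y) = sup_{i≥1} 2^{−i}|x_i − y_i|. Given δ > 0, an integer n > 0, and two n-tuples ζ = (x_1,…,x_n), η = (y_1,…,y_n) ∈ X^n whose entries are each pairwise distinct and which satisfy max_{1≤i≤n} d(x_i,y_i) < δ, there exists a homeomorphism φ of X such that D(φ,id_X) < δ and φ(x_i) = y_i for every 1 ≤ i ≤ n. -/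
/-! STATEMENT 12: the space `X = {0,1}^ℕ` of infinite binary sequences
`(x_i)_{i ≥ 1}` is modelled as `ℕ → Bool` (index `i : ℕ` corresponding to `i + 1`),
with the metric `d(x,y) = sup_{i ≥ 1} 2⁻ⁱ |x_i − y_i|`, which induces the product
topology on `ℕ → Bool`. -/

/-- The metric `d(x,y) = sup_{i ≥ 1} 2⁻ⁱ |x_i − y_i|` on `{0,1}^ℕ`
(here the `i`-th coordinate, `i : ℕ`, is the `(i+1)`-st term, so the weight is
`2 ^ (-(i+1))`; note `|x_i − y_i| = 0` or `1`). -/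
noncomputable def dBin (x y : ℕ → Bool) : ℝ :=
  ⨆ i : ℕ, if x i = y i then 0 else (2 : ℝ) ^ (-(i : ℤ) - 1)

/-- `D(φ, id) = max (sup_x d(φ x, x)) (sup_x d(φ⁻¹ x, x))` for a homeomorphism `φ`
of `{0,1}^ℕ` (whose topology is induced by the metric `dBin`). -/
noncomputable def DBinId (φ : (ℕ → Bool) ≃ₜ (ℕ → Bool)) : ℝ :=
  max (⨆ z : ℕ → Bool, dBin (φ z) z) (⨆ z : ℕ → Bool, dBin (φ.symm z) z)

private lemma xorA (a b : Bool) : xor a (xor a b) = b := by cases a <;> cases b <;> rfl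
private lemma xorB (a b : Bool) : xor a (xor b a) = b := by cases a <;> cases b <;> rfl
private lemma xorC (a b : Bool) : xor (xor a b) b = a := by cases a <;> cases b <;> rfl

private lemma cont_xor {α : Type*} [TopologicalSpace α] {a b : α → Bool}
    (ha : Continuous a) (hb : Continuous b) : Continuous fun z => xor (a z) (b z) :=
  (continuous_of_discreteTopology (f := fun p : Bool × Bool => xor p.1 p.2)).comp
    (ha.prodMk hb)

private lemma perm_aux {W V : Type*} [DecidableEq W] :
    ∀ (n : ℕ) (f g : Fin n → W), Function.Injective f → Function.Injective g →
    ∀ (q : W → V), (∀ i, q (f i) = q (g i)) →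
    ∃ σ : Equiv.Perm W, (∀ i, σ (f i) = g i) ∧ ∀ w, q (σ w) = q w := by
  intro n
  induction n with
  | zero =>
    intro f g _ _ q _
    exact ⟨1, fun i => i.elim0, fun w => rfl⟩
  | succ m ih =>
    intro f g hf hg q hq
    obtain ⟨σ, hσ1, hσ2⟩ := ih (f ∘ Fin.castSucc) (g ∘ Fin.castSucc)
      (hf.comp (Fin.castSucc_injective m)) (hg.comp (Fin.castSucc_injective m))
      q (fun i => hq _)
    set u := σ (f (Fin.last m)) with hu
    set v := g (Fin.last m) with hv
    have huv : q u = q v := by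
      rw [hu, hσ2, hq, hv]
    refine ⟨σ.trans (Equiv.swap u v), ?_, ?_⟩
    · intro i
      induction i using Fin.lastCases with
      | last =>
        simp only [Equiv.trans_apply, ← hu, Equiv.swap_apply_left, hv]
      | cast j =>
        have h1 : σ (f j.castSucc) = g j.castSucc := hσ1 j
        have hne1 : g j.castSucc ≠ u := by
          intro h
          have : σ (f j.castSucc) = σ (f (Fin.last m)) := by rw [h1, h, hu]
          have := hf (σ.injective this)
          exact absurd this (Fin.ne_last_of_lt (Fin.castSucc_lt_last j))
        have hne2 : g j.castSucc ≠ v := by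
          intro h
          have := hg (h.trans hv.symm ▸ h)
          exact absurd (hg h) (Fin.ne_last_of_lt (Fin.castSucc_lt_last j))
        simp only [Equiv.trans_apply, h1, Equiv.swap_apply_of_ne_of_ne hne1 hne2]
    · intro w
      simp only [Equiv.trans_apply]
      rcases eq_or_ne (σ w) u with h | h
      · rw [h, Equiv.swap_apply_left, ← huv, ← h, hσ2]
      rcases eq_or_ne (σ w) v with h2 | h2
      · rw [h2, Equiv.swap_apply_right, huv, ← h2, hσ2]
      · rw [Equiv.swap_apply_of_ne_of_ne h h2, hσ2]

private lemma weight_le_one (i : ℕ) : (2:ℝ) ^ (-(i:ℤ)-1) ≤ 1 := by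
  have h := zpow_le_zpow_right₀ (one_le_two : (1:ℝ) ≤ 2)
    (show -(i:ℤ)-1 ≤ 0 by omega)
  simpa using h

private lemma dBin_le_of_agree {K : ℕ} {u v : ℕ → Bool}
    (h : ∀ j, j < K → u j = v j) : dBin u v ≤ (2:ℝ) ^ (-(K:ℤ)-1) := by
  apply Real.iSup_le _ (by positivity)
  intro i
  by_cases hi : u i = v i
  · rw [if_pos hi]; positivity
  · rw [if_neg hi]
    have hKi : K ≤ i := not_lt.1 fun hc => hi (h i hc)
    exact zpow_le_zpow_right₀ one_le_two (by omega)

private lemma agree_of_dBin_lt {u v : ℕ → Bool} {j : ℕ}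
    (h : dBin u v < (2:ℝ) ^ (-(j:ℤ)-1)) : u j = v j := by
  by_contra hne
  have hb : BddAbove (Set.range fun i : ℕ =>
      if u i = v i then (0:ℝ) else (2:ℝ) ^ (-(i:ℤ)-1)) := by
    refine ⟨1, ?_⟩
    rintro r ⟨i, rfl⟩
    dsimp only
    split
    · norm_num
    · exact weight_le_one i
  have h2 := le_ciSup hb j
  rw [if_neg hne] at h2
  rw [dBin] at h
  linarith

/-- given `δ > 0` and two proper `n`-tuples `ζ, η` in `{0,1}^ℕ` with
`max_i d(x_i, y_i) < δ`, there is a homeomorphism `φ` of `{0,1}^ℕ` with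
`D(φ, id) < δ` and `φ (x i) = y i` for all `i`. -/
theorem binary_sequences_property_star (δ : ℝ) (hδ : 0 < δ) (n : ℕ) (hn : 0 < n)
    (x y : Fin n → (ℕ → Bool))
    (hx : Function.Injective x) (hy : Function.Injective y)
    (hclose : ∀ i, dBin (x i) (y i) < δ) :
    ∃ φ : (ℕ → Bool) ≃ₜ (ℕ → Bool),
      DBinId φ < δ ∧ ∀ i, φ (x i) = y i := by
  classical
  -- choose K
  have hex : ∃ k : ℕ, (2:ℝ) ^ (-(k:ℤ)-1) < δ := by
    obtain ⟨k, hk⟩ := exists_pow_lt_of_lt_one hδ (by norm_num : (1/2:ℝ) < 1)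
    refine ⟨k, lt_of_le_of_lt ?_ hk⟩
    have e : (2:ℝ) ^ (-(k:ℤ)-1) = (1/2:ℝ) ^ (k+1) := by
      rw [one_div, inv_pow, ← zpow_natCast, ← zpow_neg]
      congr 1
      push_cast
      ring
    rw [e]
    exact pow_le_pow_of_le_one (by norm_num) (by norm_num) (Nat.le_succ k)
  set K := Nat.find hex with hKdef
  have hK : (2:ℝ) ^ (-(K:ℤ)-1) < δ := Nat.find_spec hex
  have hKmin : ∀ j, j < K → δ ≤ (2:ℝ) ^ (-(j:ℤ)-1) :=
    fun j hj => le_of_not_gt (Nat.find_min hex hj)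
  have hagree : ∀ i j, j < K → x i j = y i j := fun i j hj =>
    agree_of_dBin_lt (lt_of_lt_of_le (hclose i) (hKmin j hj))
  -- choose M separating the tuples
  have hxy : ∀ i i' : Fin n, i ≠ i' → ∃ m, x i m ≠ x i' m := by
    intro i i' h
    by_contra hc
    push_neg at hc
    exact h (hx (funext hc))
  have hxy' : ∀ i i' : Fin n, i ≠ i' → ∃ m, y i m ≠ y i' m := by
    intro i i' h
    by_contra hc
    push_neg at hc
    exact h (hy (funext hc))
  set Dx : Fin n × Fin n → ℕ := fun p =>
    if h : p.1 = p.2 then 0 else Nat.find (hxy p.1 p.2 h) with hDx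
  set Dy : Fin n × Fin n → ℕ := fun p =>
    if h : p.1 = p.2 then 0 else Nat.find (hxy' p.1 p.2 h) with hDy
  set M : ℕ := K + Finset.univ.sup Dx + Finset.univ.sup Dy + 1 with hMdef
  have hKM : K ≤ M := by omega
  have hxM : Function.Injective fun i => (fun j : Fin M => x i (j : ℕ)) := by
    intro i i' hpre
    by_contra hne
    have h := hxy i i' hne
    have hm := Nat.find_spec h
    have hlt : Nat.find h < M := by
      have h1 : Dx (i, i') = Nat.find h := by rw [hDx]; exact dif_neg hne
      have h2 : Dx (i, i') ≤ Finset.univ.sup Dx :=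
        Finset.le_sup (Finset.mem_univ (i, i'))
      omega
    exact hm (congrFun hpre (⟨Nat.find h, hlt⟩ : Fin M))
  have hyM : Function.Injective fun i => (fun j : Fin M => y i (j : ℕ)) := by
    intro i i' hpre
    by_contra hne
    have h := hxy' i i' hne
    have hm := Nat.find_spec h
    have hlt : Nat.find h < M := by
      have h1 : Dy (i, i') = Nat.find h := by rw [hDy]; exact dif_neg hne
      have h2 : Dy (i, i') ≤ Finset.univ.sup Dy :=
        Finset.le_sup (Finset.mem_univ (i, i'))
      omega
    exact hm (congrFun hpre (⟨Nat.find h, hlt⟩ : Fin M))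
  -- prefix map and permutation
  set P : (ℕ → Bool) → (Fin M → Bool) := fun z j => z (j : ℕ) with hP
  set f : Fin n → (Fin M → Bool) := fun i => P (x i) with hfdef
  set g : Fin n → (Fin M → Bool) := fun i => P (y i) with hgdef
  have hf : Function.Injective f := hxM
  have hg : Function.Injective g := hyM
  set q : (Fin M → Bool) → (Fin K → Bool) := fun w j => w (Fin.castLE hKM j) with hq
  have hqfg : ∀ i, q (f i) = q (g i) := by
    intro i
    funext j
    exact hagree i ((Fin.castLE hKM j : Fin M) : ℕ) j.isLt
  obtain ⟨σ, hσf, hσq⟩ := perm_aux n f g hf hg q hqfg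
  -- the correction sequences
  set c : (Fin M → Bool) → ℕ → Bool := fun w j =>
    if hj : j < M then xor (w ⟨j, hj⟩) (σ w ⟨j, hj⟩)
    else if h2 : ∃ i, f i = w then xor (x h2.choose j) (y h2.choose j)
    else false with hc
  have cdef : ∀ w (j : ℕ) (hj : j < M), c w j = xor (w ⟨j, hj⟩) (σ w ⟨j, hj⟩) :=
    fun w j hj => dif_pos hj
  have c1 : ∀ i j, c (f i) j = xor (x i j) (y i j) := by
    intro i j
    by_cases hj : j < M
    · rw [cdef _ _ hj, hσf i]
    · rw [hc]
      dsimp only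
      rw [dif_neg hj]
      have h2 : ∃ i', f i' = f i := ⟨i, rfl⟩
      rw [dif_pos h2]
      have : h2.choose = i := hf h2.choose_spec
      rw [this]
  have c2 : ∀ w (j : ℕ), j < K → c w j = false := by
    intro w j hj
    have hjM : j < M := lt_of_lt_of_le hj hKM
    rw [cdef _ _ hjM]
    have h3 : σ w ⟨j, hjM⟩ = w ⟨j, hjM⟩ := congrFun (hσq w) (⟨j, hj⟩ : Fin K)
    rw [h3, Bool.xor_self]
  -- the homeomorphism
  set F : (ℕ → Bool) → (ℕ → Bool) := fun z k => xor (z k) (c (P z) k) with hF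
  set G : (ℕ → Bool) → (ℕ → Bool) := fun u k => xor (u k) (c (σ.symm (P u)) k) with hG
  have hPF : ∀ z, P (F z) = σ (P z) := by
    intro z
    funext j
    show xor (z (j : ℕ)) (c (P z) (j : ℕ)) = σ (P z) j
    rw [cdef _ _ j.isLt]
    have : (⟨(j : ℕ), j.isLt⟩ : Fin M) = j := rfl
    rw [this]
    exact xorA _ _
  have hPG : ∀ u, P (G u) = σ.symm (P u) := by
    intro u
    funext j
    show xor (u (j : ℕ)) (c (σ.symm (P u)) (j : ℕ)) = σ.symm (P u) j
    rw [cdef _ _ j.isLt]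
    have h1 : (⟨(j : ℕ), j.isLt⟩ : Fin M) = j := rfl
    rw [h1, Equiv.apply_symm_apply]
    have h2 : P u j = u (j : ℕ) := rfl
    rw [h2]
    exact xorB _ _
  have hlinv : Function.LeftInverse G F := by
    intro z
    funext k
    show xor (F z k) (c (σ.symm (P (F z))) k) = z k
    rw [hPF, Equiv.symm_apply_apply]
    show xor (xor (z k) (c (P z) k)) (c (P z) k) = z k
    exact xorC _ _
  have hrinv : Function.RightInverse G F := by
    intro u
    funext k
    show xor (G u k) (c (P (G u)) k) = u k
    rw [hPG]
    show xor (xor (u k) (c (σ.symm (P u)) k)) (c (σ.symm (P u)) k) = u k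
    exact xorC _ _
  have hcP : Continuous P := continuous_pi fun j => continuous_apply ((j : Fin M) : ℕ)
  have hcF : Continuous F := by
    apply continuous_pi
    intro k
    exact cont_xor (continuous_apply k)
      ((continuous_of_discreteTopology (f := fun w => c w k)).comp hcP)
  have hcG : Continuous G := by
    apply continuous_pi
    intro k
    exact cont_xor (continuous_apply k)
      ((continuous_of_discreteTopology (f := fun w => c (σ.symm w) k)).comp hcP)
  refine ⟨⟨⟨F, G, hlinv, hrinv⟩, hcF, hcG⟩, ?_, ?_⟩
  · -- DBinId < δ
    have hFfix : ∀ z, dBin (F z) z ≤ (2:ℝ) ^ (-(K:ℤ)-1) := by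
      intro z
      apply dBin_le_of_agree
      intro j hj
      show xor (z j) (c (P z) j) = z j
      rw [c2 _ j hj, Bool.xor_false]
    have hGfix : ∀ u, dBin (G u) u ≤ (2:ℝ) ^ (-(K:ℤ)-1) := by
      intro u
      apply dBin_le_of_agree
      intro j hj
      show xor (u j) (c (σ.symm (P u)) j) = u j
      rw [c2 _ j hj, Bool.xor_false]
    have h1 : (⨆ z : ℕ → Bool, dBin (F z) z) ≤ (2:ℝ) ^ (-(K:ℤ)-1) :=
      Real.iSup_le hFfix (by positivity)
    have h2 : (⨆ z : ℕ → Bool, dBin (G z) z) ≤ (2:ℝ) ^ (-(K:ℤ)-1) :=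
      Real.iSup_le hGfix (by positivity)
    rw [DBinId]
    exact max_lt (lt_of_le_of_lt h1 hK) (lt_of_le_of_lt h2 hK)
  · -- φ (x i) = y i
    intro i
    funext k
    show xor (x i k) (c (P (x i)) k) = y i k
    have : P (x i) = f i := rfl
    rw [this, c1 i k]
    exact xorA _ _
end

section
/- Let (X,d) be a compact metric space and let f be a homeomorphism of X. If X is totally disconnected (topological dimension zero) and f is equicontinuous, then f has the continuous shadowing property. -/
/-! Common definitions: distances on maps/homeomorphisms of a metric space,
topological stability and shadowing-type properties. -/

variable {X : Type*} [MetricSpace X]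

/-- An equicontinuous homeomorphism of a compact totally disconnected
(zero-dimensional) metric space has the continuous shadowing property. -/
theorem continuousShadowing_of_equicontinuous
    {X : Type*} [MetricSpace X] [CompactSpace X] [TotallyDisconnectedSpace X]
    (f : X ≃ₜ X) (hf : EquicontinuousHomeo f) :
    ContinuousShadowing f := by
  intro ε hε
  -- Step A: a finite clopen cover by sets of diameter ≤ ε
  have basis := loc_compact_Haus_tot_disc_of_zero_dim (H := X)
  have hcover : ∀ x : X, ∃ V : Set X, IsClopen V ∧ x ∈ V ∧ V ⊆ Metric.ball x (ε / 2) := by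
    intro x
    rcases basis.mem_nhds_iff.mp (Metric.ball_mem_nhds x (show (0:ℝ) < ε / 2 by linarith)) with ⟨V, hV, hxV, hVsub⟩
    exact ⟨V, hV, hxV, hVsub⟩
  choose V hVclopen hxV hVsub using hcover
  obtain ⟨t, ht⟩ := isCompact_univ.elim_finite_subcover V (fun x => (hVclopen x).isOpen)
    (fun x _ => Set.mem_iUnion.mpr ⟨x, hxV x⟩)
  set ι := {a : X // a ∈ t}
  set U : ι → Set X := fun i => V (i : X) with hU
  have hUclopen : ∀ i : ι, IsClopen (U i) := fun i => hVclopen _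
  have hUcover : ∀ x : X, ∃ i : ι, x ∈ U i := by
    intro x
    have := ht (Set.mem_univ x)
    simp only [Set.mem_iUnion] at this
    obtain ⟨a, ha, hxa⟩ := this
    exact ⟨⟨a, ha⟩, hxa⟩
  have hUdiam : ∀ (i : ι), ∀ u ∈ U i, ∀ v ∈ U i, dist u v ≤ ε := by
    intro i u hu v hv
    have h1 := hVsub (i : X) hu
    have h2 := hVsub (i : X) hv
    rw [Metric.mem_ball] at h1 h2
    calc dist u v ≤ dist u (i : X) + dist (i : X) v := dist_triangle _ _ _
      _ ≤ ε / 2 + ε / 2 := by rw [dist_comm (i : X) v]; exact add_le_add h1.le h2.le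
      _ = ε := by ring
  -- The relation: same itinerary over the cover
  set R : X → X → Prop := fun u v => ∀ i : ι, u ∈ U i ↔ v ∈ U i with hR
  have hRdist : ∀ u v, R u v → dist u v ≤ ε := by
    intro u v h
    obtain ⟨i, hi⟩ := hUcover u
    exact hUdiam i u hi v ((h i).mp hi)
  -- Step B: positive gap α
  have hgap : ∃ α > 0, ∀ u v : X, dist u v < α → R u v := by
    set K : Set (X × X) := {p | ¬ R p.1 p.2} with hK
    have hKclosed : IsClosed K := by
      have : K = ⋃ i : ι, ((U i ×ˢ (U i)ᶜ) ∪ ((U i)ᶜ ×ˢ U i)) := by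
        ext p
        simp only [hK, hR, Set.mem_setOf_eq, Set.mem_iUnion, Set.mem_union, Set.mem_prod,
          Set.mem_compl_iff]
        constructor
        · intro h
          push_neg at h
          obtain ⟨i, hi⟩ := h
          exact ⟨i, by tauto⟩
        · rintro ⟨i, hi | hi⟩ h
          · exact hi.2 ((h i).mp hi.1)
          · exact hi.1 ((h i).mpr hi.2)
      rw [this]
      exact isClosed_iUnion_of_finite fun i =>
        ((hUclopen i).isClosed.prod (hUclopen i).compl.isClosed).union
          ((hUclopen i).compl.isClosed.prod (hUclopen i).isClosed)
    rcases Set.eq_empty_or_nonempty K with hKe | hKne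
    · refine ⟨1, one_pos, fun u v _ => ?_⟩
      by_contra h
      exact absurd hKe (Set.nonempty_iff_ne_empty.mp ⟨(u, v), h⟩)
    · have hKcpt : IsCompact K := hKclosed.isCompact
      obtain ⟨p, hpK, hpmin⟩ := hKcpt.exists_isMinOn hKne
        ((continuous_dist.comp (continuous_fst.prodMk continuous_snd)).continuousOn)
      have hpne : p.1 ≠ p.2 := by
        intro h
        exact hpK fun i => by rw [h]
      refine ⟨dist p.1 p.2, dist_pos.mpr hpne, fun u v huv => ?_⟩
      by_contra h
      have := hpmin (show (u, v) ∈ K from h)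
      simp only [Function.comp] at this
      exact absurd huv (not_lt.mpr this)
  obtain ⟨α, hαpos, hα⟩ := hgap
  -- Step C: equicontinuity
  obtain ⟨δ₀, hδ₀pos, hδ₀⟩ := hf (α / 2) (by linarith)
  -- The invariant relation E
  set E : X → X → Prop := fun u v => ∀ n : ℤ, R ((f.toEquiv ^ n) u) ((f.toEquiv ^ n) v) with hE
  have hErefl : ∀ u, E u u := fun u n i => Iff.rfl
  have hEtrans : ∀ {u v w}, E u v → E v w → E u w :=
    fun h1 h2 n i => (h1 n i).trans (h2 n i)
  have hEsymm : ∀ {u v}, E u v → E v u := fun h n i => (h n i).symm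
  have hEclose : ∀ u v, dist u v ≤ δ₀ → E u v := by
    intro u v h n
    exact hα _ _ (lt_of_le_of_lt (hδ₀ u v h n) (by linarith))
  have hEdist : ∀ u v, E u v → dist u v ≤ ε := by
    intro u v h
    have := h 0
    simp only [zpow_zero, Equiv.Perm.coe_one, id_eq] at this
    exact hRdist _ _ this
  have hEf : ∀ u v, E u v → E (f.toEquiv u) (f.toEquiv v) := by
    intro u v h n
    have := h (n + 1)
    simpa only [zpow_add_one, Equiv.Perm.mul_apply] using this
  have hEfinv : ∀ u v, E u v → E ((f.toEquiv)⁻¹ u) ((f.toEquiv)⁻¹ v) := by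
    intro u v h n
    have := h (n - 1)
    simpa only [zpow_sub_one, Equiv.Perm.mul_apply] using this
  -- Conclusion
  refine ⟨δ₀, hδ₀pos, fun x => (x : ℤ → X) 0, ?_, ?_⟩
  · exact (continuous_apply (0 : ℤ)).comp continuous_subtype_val
  · rintro ⟨y, hy⟩ i
    simp only [PseudoOrbitsZ, Set.mem_setOf_eq] at hy
    have hcoe : ∀ z : X, f z = f.toEquiv z := fun z => rfl
    have key : ∀ i : ℤ, E ((f.toEquiv ^ i) (y 0)) (y i) := by
      intro i
      induction i using Int.induction_on with
      | zero => simpa using hErefl (y 0)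
      | succ k ih =>
        have hstep : ∀ u : X, f.toEquiv ((f.toEquiv ^ (k : ℤ)) u)
            = (f.toEquiv ^ ((k : ℤ) + 1)) u := by
          intro u
          rw [add_comm, zpow_add, zpow_one, Equiv.Perm.mul_apply]
        have h1 := hEf _ _ ih
        rw [hstep] at h1
        have h2 : E (f.toEquiv (y (k : ℤ))) (y ((k : ℤ) + 1)) := by
          rw [← hcoe]
          exact hEclose _ _ (hy k)
        exact hEtrans h1 h2
      | pred k ih =>
        have h2 : E (f.toEquiv (y (-(k : ℤ) - 1))) (y (-(k : ℤ))) := by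
          have h := hEclose _ _ (hy (-(k : ℤ) - 1))
          rw [hcoe] at h
          have e : (-(k : ℤ) - 1) + 1 = -(k : ℤ) := by ring
          rw [e] at h
          exact h
        have h3 : E ((f.toEquiv ^ (-(k : ℤ))) (y 0)) (f.toEquiv (y (-(k : ℤ) - 1))) :=
          hEtrans ih (hEsymm h2)
        have h4 := hEfinv _ _ h3
        have h5 : (f.toEquiv)⁻¹ ((f.toEquiv ^ (-(k : ℤ))) (y 0))
            = (f.toEquiv ^ (-(k : ℤ) - 1)) (y 0) := by
          have e : (-(k : ℤ) - 1) = -1 + -(k : ℤ) := by ring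
          rw [e, zpow_add, zpow_neg_one, Equiv.Perm.mul_apply]
        have h6 : (f.toEquiv)⁻¹ (f.toEquiv (y (-(k : ℤ) - 1))) = y (-(k : ℤ) - 1) :=
          Equiv.symm_apply_apply _ _
        rw [h5, h6] at h4
        exact h4
    exact hEdist _ _ (key i)
end
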